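/- arXiv:2603.26491 — 6 statements merged into one kernel-verified Lean document; each statement's English description precedes it below -/
import Mathlib

section
/- Let I ⊆ ℝ be an interval and K : I → ℝ a Borel measurable function that is either nondecreasing or continuous. Let S be a real-valued random variable on a probability space (Ω, 𝓕, ℙ) whose topological support 𝒮 (the support of the pushforward measure of ℙ under S) satisfies 𝒮 ⊆ K(I) := {K(θ) : θ ∈ I}. Then there exists a Borel measurable function g : 𝒮 → I such that K(g(s)) = s for every s ∈ 𝒮; consequently, Θ := g ∘ S is a random variable taking values in I with K(Θ) = S ℙ-almost surely. -/
/-!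
In the monotone case every selection of `K` on `I` is itself monotone on `K '' I`, hence Borel on
the (closed) support. In the continuous case split `I` at a point `θ₀`. On `I ∩ [θ₀, ∞)` take the
first hitting point `min {θ ≥ θ₀ : K θ = s}`: it exists because the fibres of `K` are relatively
closed, and its sublevel sets `{s | firstHit s ≤ c} = K '' (I ∩ [θ₀, c])` are intervals by the
intermediate value theorem, so it is Borel; `I ∩ (-∞, θ₀]` is the mirror image. Finally
`K (g (S ω)) = S ω` whenever `S ω` lies in the support, which happens almost surely.
-/

open MeasureTheory

/-- The topological support of a Borel measure on ℝ: the set of points all of whose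
neighbourhoods have positive measure (the smallest closed set of full measure). -/
def msupport (μ : MeasureTheory.Measure ℝ) : Set ℝ := {x : ℝ | ∀ U ∈ nhds x, μ U ≠ 0}

open Set Function

theorem Measurable.piecewise_of_domRestrict {α β : Type*} [MeasurableSpace α] [MeasurableSpace β]
    {s : Set α} [∀ x, Decidable (x ∈ s)] {f g : α → β} (hs : MeasurableSet s)
    (hf : Measurable (s.domRestrict f)) (hg : Measurable g) : Measurable (s.piecewise f g) :=
  measurable_of_restrict_of_restrict_compl hs (by rwa [domRestrict_piecewise])
    (by rw [domRestrict_piecewise_compl]; exact hg.comp measurable_subtype_coe)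

section Monotone

variable {α β : Type*} [LinearOrder α]

theorem MonotoneOn.monotoneOn_invFunOn [PartialOrder β] [Nonempty α] {f : α → β} {s : Set α}
    (hf : MonotoneOn f s) : MonotoneOn (invFunOn f s) (f '' s) := by
  intro y hy y' hy' hyy'
  by_contra! hlt
  have hy'y : y' ≤ y := by
    simpa only [invFunOn_eq hy, invFunOn_eq hy'] using
      hf (invFunOn_mem hy') (invFunOn_mem hy) hlt.le
  exact hlt.ne (congrArg _ (le_antisymm hyy' hy'y).symm)

variable [TopologicalSpace α] [OrderTopology α] [MeasurableSpace α]
  [BorelSpace α] [LinearOrder β] [TopologicalSpace β] [OrderTopology β] [SecondCountableTopology β]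
  [MeasurableSpace β] [BorelSpace β]

theorem MonotoneOn.measurable_domRestrict {f : α → β} {s : Set α} (hf : MonotoneOn f s) :
    Measurable (s.domRestrict f) := by
  refine measurable_of_Iic fun c => ?_
  have hlower : MeasurableSet (lowerClosure (s ∩ f ⁻¹' Iic c) : Set α) :=
    (lowerClosure _).lower.ordConnected.measurableSet
  convert measurable_subtype_coe hlower using 1
  ext ⟨x, hx⟩
  simp only [mem_preimage, domRestrict_apply, mem_Iic, SetLike.mem_coe, mem_lowerClosure]
  exact ⟨fun hxc => ⟨x, ⟨hx, hxc⟩, le_rfl⟩,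
    fun ⟨y, ⟨hy, hyc⟩, hxy⟩ => (hf hx hy hxy).trans hyc⟩

end Monotone

theorem MonotoneOn.exists_measurable_rightInvOn {I T : Set ℝ} {K : ℝ → ℝ} (hK : MonotoneOn K I)
    (hT : MeasurableSet T) (hTK : T ⊆ K '' I) {θ₀ : ℝ} (hθ₀ : θ₀ ∈ I) :
    ∃ g : ℝ → ℝ, Measurable g ∧ (∀ s, g s ∈ I) ∧ ∀ s ∈ T, K (g s) = s := by
  classical
  refine ⟨T.piecewise (invFunOn K I) fun _ => θ₀,
    Measurable.piecewise_of_domRestrict hT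
      ((hK.monotoneOn_invFunOn.mono hTK).measurable_domRestrict) measurable_const,
    fun s => ?_, fun s hs => ?_⟩
  · by_cases hs : s ∈ T
    · simpa only [piecewise_eq_of_mem _ _ _ hs] using invFunOn_mem (hTK hs)
    · simpa only [piecewise_eq_of_notMem _ _ _ hs] using hθ₀
  · simpa only [piecewise_eq_of_mem _ _ _ hs] using invFunOn_eq (hTK hs)

noncomputable def firstHit (K : ℝ → ℝ) (I : Set ℝ) (s : ℝ) : ℝ := sInf {θ ∈ I | K θ = s}

section FirstHit

variable {K : ℝ → ℝ} {I : Set ℝ} {a s : ℝ}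

theorem firstHit_mem (hI : I.OrdConnected) (ha : IsLeast I a) (hK : ContinuousOn K I)
    (hs : s ∈ K '' I) : firstHit K I s ∈ {θ ∈ I | K θ = s} := by
  set F := {θ ∈ I | K θ = s}
  have hF : F.Nonempty := hs
  have hbdd : BddBelow F := ⟨a, fun θ hθ => ha.2 hθ.1⟩
  obtain ⟨θ, hθ⟩ := hF
  have hmI : sInf F ∈ I :=
    hI.out ha.1 hθ.1 ⟨le_csInf ⟨θ, hθ⟩ fun x hx => ha.2 hx.1, csInf_le hbdd hθ⟩
  refine ⟨hmI, ?_⟩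
  show K (sInf F) = s
  have hKF : K '' F ⊆ {s} := by rintro _ ⟨x, hx, rfl⟩; exact hx.2
  simpa using closure_mono hKF <|
    ((hK _ hmI).mono (sep_subset _ _)).mem_closure_image (csInf_mem_closure ⟨θ, hθ⟩ hbdd)

theorem firstHit_le (ha : IsLeast I a) {θ : ℝ} (hθ : θ ∈ I) : firstHit K I (K θ) ≤ θ :=
  csInf_le ⟨a, fun _ hx => ha.2 hx.1⟩ ⟨hθ, rfl⟩

theorem firstHit_le_iff (hI : I.OrdConnected) (ha : IsLeast I a) (hK : ContinuousOn K I)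
    (hs : s ∈ K '' I) {c : ℝ} : firstHit K I s ≤ c ↔ s ∈ K '' (I ∩ Iic c) := by
  refine ⟨fun hc => ?_, ?_⟩
  · obtain ⟨hmI, hm⟩ := firstHit_mem hI ha hK hs
    exact ⟨_, ⟨hmI, hc⟩, hm⟩
  · rintro ⟨θ, ⟨hθ, hθc⟩, rfl⟩
    exact (firstHit_le ha hθ).trans hθc

theorem ContinuousOn.ordConnected_image (hK : ContinuousOn K I) (hI : I.OrdConnected) :
    (K '' I).OrdConnected :=
  (hI.isPreconnected.image K hK).ordConnected

theorem measurable_domRestrict_firstHit (hI : I.OrdConnected) (ha : IsLeast I a)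
    (hK : ContinuousOn K I) : Measurable ((K '' I).domRestrict (firstHit K I)) := by
  refine measurable_of_Iic fun c => ?_
  have himage : MeasurableSet (K '' (I ∩ Iic c)) :=
    ((hK.mono inter_subset_left).ordConnected_image (hI.inter ordConnected_Iic)).measurableSet
  convert measurable_subtype_coe himage using 1
  ext ⟨s, hs⟩
  exact firstHit_le_iff hI ha hK hs

theorem ContinuousOn.exists_measurable_rightInvOn_of_isLeast (hI : I.OrdConnected)
    (ha : IsLeast I a) (hK : ContinuousOn K I) :
    ∃ g : ℝ → ℝ, Measurable g ∧ (∀ s, g s ∈ I) ∧ ∀ s ∈ K '' I, K (g s) = s := by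
  classical
  refine ⟨(K '' I).piecewise (firstHit K I) fun _ => a,
    Measurable.piecewise_of_domRestrict (hK.ordConnected_image hI).measurableSet
      (measurable_domRestrict_firstHit hI ha hK) measurable_const, fun s => ?_, fun s hs => ?_⟩
  · by_cases hs : s ∈ K '' I
    · rw [piecewise_eq_of_mem _ _ _ hs]
      exact (firstHit_mem hI ha hK hs).1
    · rw [piecewise_eq_of_notMem _ _ _ hs]
      exact ha.1
  · rw [piecewise_eq_of_mem _ _ _ hs]
    exact (firstHit_mem hI ha hK hs).2

theorem ContinuousOn.exists_measurable_rightInvOn_of_isGreatest (hI : I.OrdConnected)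
    (ha : IsGreatest I a) (hK : ContinuousOn K I) :
    ∃ g : ℝ → ℝ, Measurable g ∧ (∀ s, g s ∈ I) ∧ ∀ s ∈ K '' I, K (g s) = s := by
  have hKneg : ContinuousOn (fun θ => K (-θ)) (Neg.neg ⁻¹' I) :=
    hK.comp continuousOn_neg fun _ h => h
  obtain ⟨g, hg, hgI, hKg⟩ := hKneg.exists_measurable_rightInvOn_of_isLeast
    (hI.preimage_anti fun _ _ h => neg_le_neg h) (a := -a)
    ⟨by simpa using ha.1, fun θ hθ => neg_le.mp (ha.2 hθ)⟩
  have himage : (fun θ => K (-θ)) '' (Neg.neg ⁻¹' I) = K '' I := by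
    rw [← image_image K Neg.neg, image_neg_eq_neg, neg_preimage, neg_neg]
  rw [himage] at hKg
  exact ⟨fun s => -g s, hg.neg, hgI, hKg⟩

end FirstHit

theorem ContinuousOn.exists_measurable_rightInvOn {K : ℝ → ℝ} {I : Set ℝ} (hI : I.OrdConnected)
    (hK : ContinuousOn K I) {θ₀ : ℝ} (hθ₀ : θ₀ ∈ I) :
    ∃ g : ℝ → ℝ, Measurable g ∧ (∀ s, g s ∈ I) ∧ ∀ s ∈ K '' I, K (g s) = s := by
  classical
  have hIr : (I ∩ Ici θ₀).OrdConnected := hI.inter ordConnected_Ici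
  have hKr : ContinuousOn K (I ∩ Ici θ₀) := hK.mono inter_subset_left
  obtain ⟨gr, hgr, hgrI, hKgr⟩ := hKr.exists_measurable_rightInvOn_of_isLeast hIr
    ⟨⟨hθ₀, self_mem_Ici⟩, fun _ h => h.2⟩
  obtain ⟨gl, hgl, hglI, hKgl⟩ :=
    (hK.mono inter_subset_left).exists_measurable_rightInvOn_of_isGreatest
      (hI.inter ordConnected_Iic) ⟨⟨hθ₀, self_mem_Iic⟩, fun _ h => h.2⟩
  refine ⟨(K '' (I ∩ Ici θ₀)).piecewise gr gl,
    hgr.piecewise (hKr.ordConnected_image hIr).measurableSet hgl,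
    fun s => ?_, ?_⟩
  · by_cases hr : s ∈ K '' (I ∩ Ici θ₀)
    · rw [piecewise_eq_of_mem _ _ _ hr]
      exact (hgrI s).1
    · rw [piecewise_eq_of_notMem _ _ _ hr]
      exact (hglI s).1
  · rintro _ ⟨θ, hθ, rfl⟩
    by_cases hr : K θ ∈ K '' (I ∩ Ici θ₀)
    · rw [piecewise_eq_of_mem _ _ _ hr]
      exact hKgr _ hr
    · rw [piecewise_eq_of_notMem _ _ _ hr]
      exact hKgl _
        ⟨θ, ⟨hθ, (le_total θ θ₀).resolve_right fun h => hr ⟨θ, ⟨hθ, h⟩, rfl⟩⟩, rfl⟩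

theorem msupport_eq_support (μ : Measure ℝ) : msupport μ = μ.support := by
  ext x
  simp [msupport, Measure.mem_support_iff_forall, pos_iff_ne_zero]

theorem stmt1_general {Ω : Type*} [MeasurableSpace Ω] (ℙ : Measure Ω) [IsProbabilityMeasure ℙ]
    (I : Set ℝ) (hI : I.OrdConnected)
    (K : ℝ → ℝ)
    (hK : MonotoneOn K I ∨ ContinuousOn K I)
    (S : Ω → ℝ) (hS : Measurable S)
    (hsupp : msupport (ℙ.map S) ⊆ K '' I) :
    ∃ g : ℝ → ℝ, Measurable g ∧
      (∀ s ∈ msupport (ℙ.map S), g s ∈ I ∧ K (g s) = s) ∧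
      (∀ s : ℝ, g s ∈ I) ∧
      (∀ᵐ ω ∂ℙ, K (g (S ω)) = S ω) := by
  rw [msupport_eq_support] at hsupp ⊢
  have : IsProbabilityMeasure (ℙ.map S) := Measure.isProbabilityMeasure_map hS.aemeasurable
  obtain ⟨s₀, hs₀⟩ := (ℙ.map S).nonempty_support (IsProbabilityMeasure.ne_zero _)
  obtain ⟨θ₀, hθ₀, -⟩ := hsupp hs₀
  obtain ⟨g, hg, hgI, hKg⟩ : ∃ g : ℝ → ℝ, Measurable g ∧ (∀ s, g s ∈ I) ∧
      ∀ s ∈ (ℙ.map S).support, K (g s) = s := by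
    rcases hK with hK | hK
    · exact hK.exists_measurable_rightInvOn Measure.isClosed_support.measurableSet hsupp hθ₀
    · obtain ⟨g, hg, hgI, hKg⟩ := hK.exists_measurable_rightInvOn hI hθ₀
      exact ⟨g, hg, hgI, fun s hs => hKg s (hsupp hs)⟩
  refine ⟨g, hg, fun s hs => ⟨hgI s, hKg s hs⟩, hgI, ?_⟩
  filter_upwards [ae_of_ae_map hS.aemeasurable Measure.support_mem_ae] with ω hω
  exact hKg _ hω

/-- If `K` is a Borel measurable function on an interval `I` that is
nondecreasing or continuous on `I`, and the topological support `𝒮` of the distribution of `S`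
satisfies `𝒮 ⊆ K '' I`, then `K` admits a measurable right-inverse `g` on `𝒮` taking values
in `I`; consequently `Θ := g ∘ S` takes values in `I` and `K (Θ ω) = S ω` ℙ-a.s. -/
theorem stmt1 {Ω : Type*} [MeasurableSpace Ω] (ℙ : Measure Ω) [IsProbabilityMeasure ℙ]
    (I : Set ℝ) (hI : I.OrdConnected)
    (K : ℝ → ℝ) (hKmeas : Measurable K)
    (hK : MonotoneOn K I ∨ ContinuousOn K I)
    (S : Ω → ℝ) (hS : Measurable S)
    (hsupp : msupport (ℙ.map S) ⊆ K '' I) :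
    ∃ g : ℝ → ℝ, Measurable g ∧
      (∀ s ∈ msupport (ℙ.map S), g s ∈ I ∧ K (g s) = s) ∧
      (∀ s : ℝ, g s ∈ I) ∧
      (∀ᵐ ω ∂ℙ, K (g (S ω)) = S ω) :=
  stmt1_general ℙ I hI K hK S hS hsupp
end

section
/- Let S be a real-valued random variable and (D_θ)_{θ ∈ (a,b)} a family of distortion functions such that for every p ∈ [0,1] the map θ ↦ D_θ(p) is nondecreasing and continuous on (a,b). Set K(θ) = ρ_{D_θ}(S), a* = inf{θ ∈ (a,b) : K(θ) > −∞}, and b* = sup{θ ∈ (a,b) : K(θ) < +∞}. Then K is real-valued and continuous on the interval (a*, b*). -/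
open MeasureTheory Filter Set
open scoped ENNReal
open scoped Topology

/-- Survival function `F̄_Z(s) = μ(Z > s)` of `Z` under `μ`. -/
noncomputable def surv {Ω : Type*} [MeasurableSpace Ω] (μ : Measure Ω) (Z : Ω → ℝ) (s : ℝ) : ℝ :=
  (μ {ω | s < Z ω}).toReal

/-- A distortion function: a nondecreasing map of `[0,1]` into `[0,1]`
with `D 0 = 0` and `D 1 = 1`. -/
def IsDistortion (D : ℝ → ℝ) : Prop :=
  MonotoneOn D (Set.Icc 0 1) ∧ D 0 = 0 ∧ D 1 = 1 ∧
    ∀ p ∈ Set.Icc (0:ℝ) 1, D p ∈ Set.Icc (0:ℝ) 1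

/-- Positive part `∫_0^∞ D(F̄_Z(s)) ds` of the distortion risk measure. -/
noncomputable def rhoPos {Ω : Type*} [MeasurableSpace Ω] (μ : Measure Ω) (D : ℝ → ℝ)
    (Z : Ω → ℝ) : ℝ≥0∞ :=
  ∫⁻ s in Set.Ioi (0:ℝ), ENNReal.ofReal (D (surv μ Z s))

/-- Negative part `∫_{-∞}^0 (1 - D(F̄_Z(s))) ds` of the distortion risk measure. -/
noncomputable def rhoNeg {Ω : Type*} [MeasurableSpace Ω] (μ : Measure Ω) (D : ℝ → ℝ)
    (Z : Ω → ℝ) : ℝ≥0∞ :=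
  ∫⁻ s in Set.Iic (0:ℝ), ENNReal.ofReal (1 - D (surv μ Z s))

/-- The distortion risk measure
`ρ_D(Z) = ∫_0^∞ D(F̄_Z(s)) ds − ∫_{-∞}^0 (1 − D(F̄_Z(s))) ds`, valued in `[-∞, +∞]`. -/
noncomputable def distRho {Ω : Type*} [MeasurableSpace Ω] (μ : Measure Ω) (D : ℝ → ℝ)
    (Z : Ω → ℝ) : EReal :=
  (rhoPos μ D Z : EReal) - (rhoNeg μ D Z : EReal)

/-- `ρ_D(Z)` is well defined when the two defining integrals are not both infinite. -/
def rhoDefinedAt {Ω : Type*} [MeasurableSpace Ω] (μ : Measure Ω) (D : ℝ → ℝ)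
    (Z : Ω → ℝ) : Prop :=
  rhoPos μ D Z ≠ ⊤ ∨ rhoNeg μ D Z ≠ ⊤

/-- `a* = inf {θ ∈ (a,b) : ρ_{D_θ}(S) > -∞}`, as an extended real. -/
noncomputable def distAstar {Ω : Type*} [MeasurableSpace Ω] (μ : Measure Ω) (S : Ω → ℝ)
    (a b : EReal) (D : ℝ → ℝ → ℝ) : EReal :=
  sInf ((fun θ : ℝ => (θ : EReal)) ''
    {θ : ℝ | (θ : EReal) ∈ Set.Ioo a b ∧ distRho μ (D θ) S ≠ ⊥})

/-- `b* = sup {θ ∈ (a,b) : ρ_{D_θ}(S) < +∞}`, as an extended real. -/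
noncomputable def distBstar {Ω : Type*} [MeasurableSpace Ω] (μ : Measure Ω) (S : Ω → ℝ)
    (a b : EReal) (D : ℝ → ℝ → ℝ) : EReal :=
  sSup ((fun θ : ℝ => (θ : EReal)) ''
    {θ : ℝ | (θ : EReal) ∈ Set.Ioo a b ∧ distRho μ (D θ) S ≠ ⊤})

/-- If `θ ↦ D_θ(p)` is nondecreasing and continuous on `(a,b)` for every
`p ∈ [0,1]`, then `K(θ) = ρ_{D_θ}(S)` is real-valued and continuous on `(a*, b*)`. -/
theorem stmt5 {Ω : Type*} [MeasurableSpace Ω] (P : Measure Ω) [IsProbabilityMeasure P]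
    (S : Ω → ℝ) (hS : Measurable S)
    (a b : EReal) (hab : a < b)
    (D : ℝ → ℝ → ℝ)
    (hD : ∀ θ : ℝ, (θ : EReal) ∈ Set.Ioo a b → IsDistortion (D θ))
    (hmono : ∀ p ∈ Set.Icc (0:ℝ) 1, ∀ θ₁ θ₂ : ℝ, (θ₁ : EReal) ∈ Set.Ioo a b →
      (θ₂ : EReal) ∈ Set.Ioo a b → θ₁ ≤ θ₂ → D θ₁ p ≤ D θ₂ p)
    (hcont : ∀ p ∈ Set.Icc (0:ℝ) 1,
      ContinuousOn (fun θ : ℝ => D θ p) {θ : ℝ | (θ : EReal) ∈ Set.Ioo a b}) :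
    (∀ θ : ℝ, distAstar P S a b D < (θ : EReal) → (θ : EReal) < distBstar P S a b D →
      distRho P (D θ) S ≠ ⊥ ∧ distRho P (D θ) S ≠ ⊤) ∧
    ContinuousOn (fun θ : ℝ => (distRho P (D θ) S).toReal)
      {θ : ℝ | distAstar P S a b D < (θ : EReal) ∧ (θ : EReal) < distBstar P S a b D} := by

  -- Abbreviations
  have hsurv : ∀ s : ℝ, surv P S s ∈ Set.Icc (0:ℝ) 1 := by
    intro s
    refine ⟨ENNReal.toReal_nonneg, ?_⟩
    have h1 : P {ω | s < S ω} ≤ 1 := prob_le_one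
    calc (P {ω | s < S ω}).toReal ≤ (1 : ℝ≥0∞).toReal :=
          ENNReal.toReal_mono ENNReal.one_ne_top h1
      _ = 1 := by simp
  have hsurv_anti : Antitone (surv P S) := by
    intro s t hst
    exact ENNReal.toReal_mono (measure_ne_top P _)
      (measure_mono (fun ω h => lt_of_le_of_lt hst h))
  have hanti : ∀ θ : ℝ, (θ : EReal) ∈ Set.Ioo a b →
      Antitone (fun s : ℝ => D θ (surv P S s)) := by
    intro θ hθ s t hst
    exact (hD θ hθ).1 (hsurv t) (hsurv s) (hsurv_anti hst)
  have hg01 : ∀ θ : ℝ, (θ : EReal) ∈ Set.Ioo a b → ∀ s : ℝ,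
      D θ (surv P S s) ∈ Set.Icc (0:ℝ) 1 := fun θ hθ s => (hD θ hθ).2.2.2 _ (hsurv s)
  have hposmono : ∀ θ₁ θ₂ : ℝ, (θ₁ : EReal) ∈ Set.Ioo a b → (θ₂ : EReal) ∈ Set.Ioo a b →
      θ₁ ≤ θ₂ → rhoPos P (D θ₁) S ≤ rhoPos P (D θ₂) S := by
    intro θ₁ θ₂ h1 h2 hle
    exact lintegral_mono fun s => ENNReal.ofReal_le_ofReal (hmono _ (hsurv s) _ _ h1 h2 hle)
  have hnegmono : ∀ θ₁ θ₂ : ℝ, (θ₁ : EReal) ∈ Set.Ioo a b → (θ₂ : EReal) ∈ Set.Ioo a b →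
      θ₁ ≤ θ₂ → rhoNeg P (D θ₂) S ≤ rhoNeg P (D θ₁) S := by
    intro θ₁ θ₂ h1 h2 hle
    exact lintegral_mono fun s => ENNReal.ofReal_le_ofReal
      (sub_le_sub_left (hmono _ (hsurv s) _ _ h1 h2 hle) 1)
  have ecoe : ∀ x : ℝ≥0∞, x ≠ ⊤ → (x : EReal) = ((x.toReal : ℝ) : EReal) := by
    intro x hx
    have h := EReal.coe_toReal (x := (x : EReal))
      (by simpa [EReal.coe_ennreal_eq_top_iff] using hx) (EReal.coe_ennreal_ne_bot x)
    rw [EReal.toReal_coe_ennreal] at h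
    exact h.symm
  have hbot : ∀ θ : ℝ, rhoNeg P (D θ) S = ⊤ → distRho P (D θ) S = ⊥ := by
    intro θ h
    unfold distRho
    rw [h, EReal.coe_ennreal_top, EReal.sub_top]
  have htop : ∀ θ : ℝ, rhoNeg P (D θ) S ≠ ⊤ → rhoPos P (D θ) S = ⊤ →
      distRho P (D θ) S = ⊤ := by
    intro θ hn hp
    unfold distRho
    rw [hp, EReal.coe_ennreal_top, ecoe _ hn, EReal.top_sub_coe]
  -- key extraction lemma
  have hkey : ∀ θ : ℝ, distAstar P S a b D < (θ : EReal) → (θ : EReal) < distBstar P S a b D →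
      ∃ θ₁ θ₂ : ℝ, θ₁ < θ ∧ θ < θ₂ ∧ (θ₁ : EReal) ∈ Set.Ioo a b ∧ (θ₂ : EReal) ∈ Set.Ioo a b ∧
        rhoNeg P (D θ₁) S ≠ ⊤ ∧ rhoPos P (D θ₂) S ≠ ⊤ := by
    intro θ h1 h2
    rw [distAstar, sInf_lt_iff] at h1
    rw [distBstar, lt_sSup_iff] at h2
    obtain ⟨x, ⟨θ₁, ⟨hθ₁ab, hθ₁bot⟩, rfl⟩, hx⟩ := h1
    obtain ⟨y, ⟨θ₂, ⟨hθ₂ab, hθ₂top⟩, rfl⟩, hy⟩ := h2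
    have hlt1 : θ₁ < θ := EReal.coe_lt_coe_iff.1 hx
    have hlt2 : θ < θ₂ := EReal.coe_lt_coe_iff.1 hy
    have hn1 : rhoNeg P (D θ₁) S ≠ ⊤ := fun h => hθ₁bot (hbot _ h)
    have hn2 : rhoNeg P (D θ₂) S ≠ ⊤ :=
      fun h => hn1 (top_le_iff.1 (h ▸ hnegmono θ₁ θ₂ hθ₁ab hθ₂ab (hlt1.trans hlt2).le))
    exact ⟨θ₁, θ₂, hlt1, hlt2, hθ₁ab, hθ₂ab, hn1,
      fun h => hθ₂top (htop _ hn2 h)⟩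
  have hfin : ∀ θ : ℝ, distAstar P S a b D < (θ : EReal) → (θ : EReal) < distBstar P S a b D →
      (θ : EReal) ∈ Set.Ioo a b ∧ rhoPos P (D θ) S ≠ ⊤ ∧ rhoNeg P (D θ) S ≠ ⊤ := by
    intro θ h1 h2
    obtain ⟨θ₁, θ₂, hlt1, hlt2, hm1, hm2, hn1, hp2⟩ := hkey θ h1 h2
    have hmem : (θ : EReal) ∈ Set.Ioo a b := by
      refine ⟨lt_trans hm1.1 ?_, lt_trans ?_ hm2.2⟩ <;> exact_mod_cast (by assumption)
    refine ⟨hmem, ?_, ?_⟩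
    · exact fun h => hp2 (top_le_iff.1 (h ▸ hposmono θ θ₂ hmem hm2 hlt2.le))
    · exact fun h => hn1 (top_le_iff.1 (h ▸ hnegmono θ₁ θ hm1 hmem hlt1.le))
  have hreal : ∀ θ : ℝ, distAstar P S a b D < (θ : EReal) → (θ : EReal) < distBstar P S a b D →
      distRho P (D θ) S =
        (((rhoPos P (D θ) S).toReal - (rhoNeg P (D θ) S).toReal : ℝ) : EReal) := by
    intro θ h1 h2
    obtain ⟨_, hp, hn⟩ := hfin θ h1 h2
    unfold distRho
    rw [ecoe _ hp, ecoe _ hn, ← EReal.coe_sub]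
  constructor
  · intro θ h1 h2
    rw [hreal θ h1 h2]
    exact ⟨EReal.coe_ne_bot _, EReal.coe_ne_top _⟩
  · -- continuity
    have hopen1 : IsOpen {θ : ℝ | (θ : EReal) ∈ Set.Ioo a b} :=
      isOpen_Ioo.preimage continuous_coe_real_ereal
    set U : Set ℝ :=
      {θ : ℝ | distAstar P S a b D < (θ : EReal) ∧ (θ : EReal) < distBstar P S a b D} with hU
    have hcontPos : ∀ θ₀ ∈ U, ContinuousAt
        (fun θ : ℝ => ∫ s in Set.Ioi (0:ℝ), D θ (surv P S s)) θ₀ := by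
      intro θ₀ hθ₀
      obtain ⟨θ₁, θ₂, hlt1, hlt2, hm1, hm2, hn1, hp2⟩ := hkey θ₀ hθ₀.1 hθ₀.2
      obtain ⟨hmem, -, -⟩ := hfin θ₀ hθ₀.1 hθ₀.2
      refine continuousAt_of_dominated (bound := fun s => D θ₂ (surv P S s)) ?_ ?_ ?_ ?_
      · exact Filter.eventually_of_mem (hopen1.mem_nhds hmem)
          (fun θ hθ => ((hanti θ hθ).measurable).aestronglyMeasurable)
      · have hnb : {θ : ℝ | (θ : EReal) ∈ Set.Ioo a b} ∩ Set.Iio θ₂ ∈ 𝓝 θ₀ :=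
          Filter.inter_mem (hopen1.mem_nhds hmem) (Iio_mem_nhds hlt2)
        refine Filter.eventually_of_mem hnb (fun θ hθ => Filter.Eventually.of_forall fun s => ?_)
        rw [Real.norm_eq_abs, abs_of_nonneg (hg01 θ hθ.1 s).1]
        exact hmono _ (hsurv s) θ θ₂ hθ.1 hm2 hθ.2.le
      · refine ⟨((hanti θ₂ hm2).measurable).aestronglyMeasurable, ?_⟩
        rw [hasFiniteIntegral_iff_ofReal
          (Filter.Eventually.of_forall fun s => (hg01 θ₂ hm2 s).1)]
        exact lt_top_iff_ne_top.2 hp2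
      · exact Filter.Eventually.of_forall fun s =>
          (hcont _ (hsurv s)).continuousAt (hopen1.mem_nhds hmem)
    have hcontNeg : ∀ θ₀ ∈ U, ContinuousAt
        (fun θ : ℝ => ∫ s in Set.Iic (0:ℝ), (1 - D θ (surv P S s))) θ₀ := by
      intro θ₀ hθ₀
      obtain ⟨θ₁, θ₂, hlt1, hlt2, hm1, hm2, hn1, hp2⟩ := hkey θ₀ hθ₀.1 hθ₀.2
      obtain ⟨hmem, -, -⟩ := hfin θ₀ hθ₀.1 hθ₀.2
      refine continuousAt_of_dominated (bound := fun s => 1 - D θ₁ (surv P S s)) ?_ ?_ ?_ ?_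
      · exact Filter.eventually_of_mem (hopen1.mem_nhds hmem)
          (fun θ hθ => (measurable_const.sub (hanti θ hθ).measurable).aestronglyMeasurable)
      · have hnb : {θ : ℝ | (θ : EReal) ∈ Set.Ioo a b} ∩ Set.Ioi θ₁ ∈ 𝓝 θ₀ :=
          Filter.inter_mem (hopen1.mem_nhds hmem) (Ioi_mem_nhds hlt1)
        refine Filter.eventually_of_mem hnb (fun θ hθ => Filter.Eventually.of_forall fun s => ?_)
        rw [Real.norm_eq_abs, abs_of_nonneg (sub_nonneg.2 (hg01 θ hθ.1 s).2)]
        exact sub_le_sub_left (hmono _ (hsurv s) θ₁ θ hm1 hθ.1 hθ.2.le) 1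
      · refine ⟨(measurable_const.sub (hanti θ₁ hm1).measurable).aestronglyMeasurable, ?_⟩
        rw [hasFiniteIntegral_iff_ofReal
          (Filter.Eventually.of_forall fun s => sub_nonneg.2 (hg01 θ₁ hm1 s).2)]
        exact lt_top_iff_ne_top.2 hn1
      · exact Filter.Eventually.of_forall fun s =>
          (continuousAt_const.sub
            ((hcont _ (hsurv s)).continuousAt (hopen1.mem_nhds hmem)))
    refine ContinuousOn.congr (f := fun θ : ℝ =>
        (∫ s in Set.Ioi (0:ℝ), D θ (surv P S s)) -
          ∫ s in Set.Iic (0:ℝ), (1 - D θ (surv P S s))) ?_ ?_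
    · exact fun θ₀ hθ₀ =>
        ((hcontPos θ₀ hθ₀).sub (hcontNeg θ₀ hθ₀)).continuousWithinAt
    · intro θ hθ
      obtain ⟨hmem, hp, hn⟩ := hfin θ hθ.1 hθ.2
      show (distRho P (D θ) S).toReal =
        (∫ s in Set.Ioi (0:ℝ), D θ (surv P S s)) -
          ∫ s in Set.Iic (0:ℝ), (1 - D θ (surv P S s))
      rw [hreal θ hθ.1 hθ.2, EReal.toReal_coe]
      have e1 : ∫ s in Set.Ioi (0:ℝ), D θ (surv P S s) = (rhoPos P (D θ) S).toReal := by
        rw [integral_eq_lintegral_of_nonneg_ae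
          (Filter.Eventually.of_forall fun s => (hg01 θ hmem s).1)
          ((hanti θ hmem).measurable).aestronglyMeasurable]
        rfl
      have e2 : ∫ s in Set.Iic (0:ℝ), (1 - D θ (surv P S s)) = (rhoNeg P (D θ) S).toReal := by
        rw [integral_eq_lintegral_of_nonneg_ae
          (Filter.Eventually.of_forall fun s => sub_nonneg.2 (hg01 θ hmem s).2)
          (measurable_const.sub (hanti θ hmem).measurable).aestronglyMeasurable]
        rfl
      rw [e1, e2]
end

section
/- Let I ⊆ ℝ and let (D_θ)_{θ ∈ I} be a family of distortion functions such that for every p ∈ [0,1] the map θ ↦ D_θ(p) is nondecreasing on I. Let Z₁, …, Z_n be real-valued random variables such that ρ_{D_θ}(Z_i) is finite for every θ ∈ I and every i = 1, …, n. Then each map θ ↦ ρ_{D_θ}(Z_i) is nondecreasing on I, and consequently, for every random variable Θ : Ω → I, the random vector (ρ_{D_Θ}(Z₁), …, ρ_{D_Θ}(Z_n)) is comonotonic. -/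
open MeasureTheory Filter Set
open scoped ENNReal

/-- A finite family of real random variables is comonotonic if all pairwise increments
move in the same direction. -/
def Comonotonic {Ω : Type*} {n : ℕ} (H : Fin n → Ω → ℝ) : Prop :=
  ∀ i j : Fin n, ∀ ω ω' : Ω, 0 ≤ (H i ω - H i ω') * (H j ω - H j ω')

/-- If `θ ↦ D_θ(p)` is nondecreasing on `I` for every `p ∈ [0,1]` and each
`ρ_{D_θ}(Z_i)` is finite, then each `θ ↦ ρ_{D_θ}(Z_i)` is nondecreasing on `I`, and for any
random variable `Θ` with values in `I` the vector `(ρ_{D_Θ}(Z₁), …, ρ_{D_Θ}(Z_n))` is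
comonotonic. -/
theorem stmt8 {Ω : Type*} [MeasurableSpace Ω] (P : Measure Ω) [IsProbabilityMeasure P]
    (I : Set ℝ) (D : ℝ → ℝ → ℝ)
    (hD : ∀ θ ∈ I, IsDistortion (D θ))
    (hmono : ∀ p ∈ Set.Icc (0:ℝ) 1, ∀ θ₁ ∈ I, ∀ θ₂ ∈ I, θ₁ ≤ θ₂ → D θ₁ p ≤ D θ₂ p)
    (n : ℕ) (Z : Fin n → Ω → ℝ) (hZ : ∀ i, Measurable (Z i))
    (hfin : ∀ θ ∈ I, ∀ i, distRho P (D θ) (Z i) ≠ ⊥ ∧ distRho P (D θ) (Z i) ≠ ⊤) :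
    (∀ i : Fin n, ∀ θ₁ ∈ I, ∀ θ₂ ∈ I, θ₁ ≤ θ₂ →
      distRho P (D θ₁) (Z i) ≤ distRho P (D θ₂) (Z i)) ∧
    (∀ Θ : Ω → ℝ, (∀ ω, Θ ω ∈ I) →
      Comonotonic (fun (i : Fin n) (ω : Ω) => (distRho P (D (Θ ω)) (Z i)).toReal)) := by

  -- survival values lie in [0,1]
  have hs : ∀ (i : Fin n) (s : ℝ), surv P (Z i) s ∈ Set.Icc (0:ℝ) 1 := by
    intro i s
    constructor
    · exact ENNReal.toReal_nonneg
    · have h1 : P {ω | s < Z i ω} ≤ 1 := prob_le_one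
      calc (P {ω | s < Z i ω}).toReal ≤ (1 : ℝ≥0∞).toReal :=
            ENNReal.toReal_mono (by simp) h1
        _ = 1 := by simp
  have key : ∀ i : Fin n, ∀ θ₁ ∈ I, ∀ θ₂ ∈ I, θ₁ ≤ θ₂ →
      distRho P (D θ₁) (Z i) ≤ distRho P (D θ₂) (Z i) := by
    intro i θ₁ h1 θ₂ h2 hle
    have hpos : rhoPos P (D θ₁) (Z i) ≤ rhoPos P (D θ₂) (Z i) := by
      refine lintegral_mono fun s => ENNReal.ofReal_le_ofReal ?_
      exact hmono _ (hs i s) θ₁ h1 θ₂ h2 hle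
    have hneg : rhoNeg P (D θ₂) (Z i) ≤ rhoNeg P (D θ₁) (Z i) := by
      refine lintegral_mono fun s => ENNReal.ofReal_le_ofReal ?_
      have := hmono _ (hs i s) θ₁ h1 θ₂ h2 hle
      linarith
    exact EReal.sub_le_sub (by exact_mod_cast hpos) (by exact_mod_cast hneg)
  refine ⟨key, ?_⟩
  intro Θ hΘ i j ω ω'
  rcases le_total (Θ ω') (Θ ω) with h | h
  · have hi := key i _ (hΘ ω') _ (hΘ ω) h
    have hj := key j _ (hΘ ω') _ (hΘ ω) h
    have hi' : (distRho P (D (Θ ω')) (Z i)).toReal ≤ (distRho P (D (Θ ω)) (Z i)).toReal :=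
      EReal.toReal_le_toReal hi (hfin _ (hΘ ω') i).1 (hfin _ (hΘ ω) i).2
    have hj' : (distRho P (D (Θ ω')) (Z j)).toReal ≤ (distRho P (D (Θ ω)) (Z j)).toReal :=
      EReal.toReal_le_toReal hj (hfin _ (hΘ ω') j).1 (hfin _ (hΘ ω) j).2
    exact mul_nonneg (by linarith) (by linarith)
  · have hi := key i _ (hΘ ω) _ (hΘ ω') h
    have hj := key j _ (hΘ ω) _ (hΘ ω') h
    have hi' : (distRho P (D (Θ ω)) (Z i)).toReal ≤ (distRho P (D (Θ ω')) (Z i)).toReal :=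
      EReal.toReal_le_toReal hi (hfin _ (hΘ ω) i).1 (hfin _ (hΘ ω') i).2
    have hj' : (distRho P (D (Θ ω)) (Z j)).toReal ≤ (distRho P (D (Θ ω')) (Z j)).toReal :=
      EReal.toReal_le_toReal hj (hfin _ (hΘ ω) j).1 (hfin _ (hΘ ω') j).2
    nlinarith
end

section
/- Let μ be a Borel probability measure on ℝ (the distribution of a random variable S). Let w₁, w₂ : ℝ → [0,∞) be Borel measurable functions such that for all s₁ ≤ s₂ in the topological support of μ, w₂(s₂) w₁(s₁) ≥ w₂(s₁) w₁(s₂). Let g : ℝ → ℝ be nondecreasing with ∫ |g| w_k dμ < ∞ and ∫ w_k dμ < ∞ for k = 1, 2. Then (∫ g w₂ dμ)(∫ w₁ dμ) ≥ (∫ g w₁ dμ)(∫ w₂ dμ). -/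
open MeasureTheory

lemma ae_mem_msupport (μ : MeasureTheory.Measure ℝ) : ∀ᵐ x ∂μ, x ∈ msupport μ := by
  have h : μ (⋃₀ {U : Set ℝ | IsOpen U ∧ μ U = 0}) = 0 := by
    obtain ⟨T, hTc, hTsub, hTU⟩ := TopologicalSpace.isOpen_sUnion_countable {U : Set ℝ | IsOpen U ∧ μ U = 0}
      (fun s hs => hs.1)
    rw [← hTU]
    exact (measure_sUnion_null_iff hTc).2 fun s hs => (hTsub hs).2
  refine measure_mono_null (fun x hx => ?_) h
  have hx' : ¬ ∀ U ∈ nhds x, μ U ≠ 0 := hx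
  push_neg at hx'
  obtain ⟨U, hU, hU0⟩ := hx'
  obtain ⟨V, hVU, hVopen, hxV⟩ := mem_nhds_iff.1 hU
  exact ⟨V, ⟨hVopen, measure_mono_null hVU hU0⟩, hxV⟩

/-- (Correlation inequality.) If `w₁, w₂ ≥ 0` satisfy the likelihood-ratio
ordering `w₂(s₂) w₁(s₁) ≥ w₂(s₁) w₁(s₂)` for `s₁ ≤ s₂` in the support of `μ`, and `g` is
nondecreasing with `∫ |g| w_k dμ < ∞` and `∫ w_k dμ < ∞`, then
`(∫ g w₂ dμ)(∫ w₁ dμ) ≥ (∫ g w₁ dμ)(∫ w₂ dμ)`. -/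
theorem stmt9 (μ : Measure ℝ) [IsProbabilityMeasure μ]
    (w₁ w₂ : ℝ → ℝ) (hw₁meas : Measurable w₁) (hw₂meas : Measurable w₂)
    (hw₁0 : ∀ s, 0 ≤ w₁ s) (hw₂0 : ∀ s, 0 ≤ w₂ s)
    (hMLR : ∀ s₁ ∈ msupport μ, ∀ s₂ ∈ msupport μ, s₁ ≤ s₂ →
      w₂ s₁ * w₁ s₂ ≤ w₂ s₂ * w₁ s₁)
    (g : ℝ → ℝ) (hg : Monotone g)
    (hint₁ : Integrable (fun s => |g s| * w₁ s) μ)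
    (hint₂ : Integrable (fun s => |g s| * w₂ s) μ)
    (hw₁int : Integrable w₁ μ) (hw₂int : Integrable w₂ μ) :
    (∫ s, g s * w₁ s ∂μ) * (∫ s, w₂ s ∂μ) ≤ (∫ s, g s * w₂ s ∂μ) * (∫ s, w₁ s ∂μ) := by
  have hgm : Measurable g := hg.measurable
  have hgw₁ : Integrable (fun s => g s * w₁ s) μ := by
    refine hint₁.mono' ((hgm.mul hw₁meas).aestronglyMeasurable) (Filter.Eventually.of_forall
      fun s => ?_)
    rw [Real.norm_eq_abs, abs_mul, abs_of_nonneg (hw₁0 s)]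
  have hgw₂ : Integrable (fun s => g s * w₂ s) μ := by
    refine hint₂.mono' ((hgm.mul hw₂meas).aestronglyMeasurable) (Filter.Eventually.of_forall
      fun s => ?_)
    rw [Real.norm_eq_abs, abs_mul, abs_of_nonneg (hw₂0 s)]
  set ν := μ.prod μ with hν
  -- the four product integrands are integrable
  have h1 : Integrable (fun p : ℝ × ℝ => (g p.1 * w₂ p.1) * w₁ p.2) ν := hgw₂.mul_prod hw₁int
  have h2 : Integrable (fun p : ℝ × ℝ => (g p.1 * w₁ p.1) * w₂ p.2) ν := hgw₁.mul_prod hw₂int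
  have h3 : Integrable (fun p : ℝ × ℝ => w₂ p.1 * (g p.2 * w₁ p.2)) ν := hw₂int.mul_prod hgw₁
  have h4 : Integrable (fun p : ℝ × ℝ => w₁ p.1 * (g p.2 * w₂ p.2)) ν := hw₁int.mul_prod hgw₂
  set F : ℝ × ℝ → ℝ :=
    fun p => (g p.1 - g p.2) * (w₂ p.1 * w₁ p.2 - w₁ p.1 * w₂ p.2) with hF
  have hFeq : ∀ p : ℝ × ℝ, F p = (g p.1 * w₂ p.1) * w₁ p.2 - (g p.1 * w₁ p.1) * w₂ p.2
      - w₂ p.1 * (g p.2 * w₁ p.2) + w₁ p.1 * (g p.2 * w₂ p.2) := by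
    intro p; simp only [hF]; ring
  have hFint : Integrable F ν := by
    have := ((h1.sub h2).sub h3).add h4
    exact this.congr (Filter.Eventually.of_forall fun p => (hFeq p).symm)
  have hF0 : 0 ≤ᵐ[ν] F := by
    have hs : ∀ᵐ p ∂ν, p.1 ∈ msupport μ ∧ p.2 ∈ msupport μ := by
      have h1 : ∀ᵐ p ∂ν, p.1 ∈ msupport μ :=
        (Measure.quasiMeasurePreserving_fst (μ := μ) (ν := μ)).ae (ae_mem_msupport μ)
      have h2 : ∀ᵐ p ∂ν, p.2 ∈ msupport μ :=
        (Measure.quasiMeasurePreserving_snd (μ := μ) (ν := μ)).ae (ae_mem_msupport μ)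
      exact h1.and h2
    filter_upwards [hs] with p hp
    simp only [Pi.zero_apply, hF]
    rcases le_total p.2 p.1 with h | h
    · have hM := hMLR p.2 hp.2 p.1 hp.1 h
      refine mul_nonneg (sub_nonneg.2 (hg h)) ?_
      have hc : w₁ p.1 * w₂ p.2 = w₂ p.2 * w₁ p.1 := mul_comm _ _
      linarith
    · have hM := hMLR p.1 hp.1 p.2 hp.2 h
      have hA : g p.1 - g p.2 ≤ 0 := sub_nonpos.2 (hg h)
      have hB : w₂ p.1 * w₁ p.2 - w₁ p.1 * w₂ p.2 ≤ 0 := by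
        have hc : w₁ p.1 * w₂ p.2 = w₂ p.2 * w₁ p.1 := mul_comm _ _
        linarith
      nlinarith [mul_nonneg (neg_nonneg.2 hA) (neg_nonneg.2 hB)]
  have hint : 0 ≤ ∫ p, F p ∂ν := integral_nonneg_of_ae hF0
  have hval : ∫ p, F p ∂ν =
      2 * ((∫ s, g s * w₂ s ∂μ) * (∫ s, w₁ s ∂μ) - (∫ s, g s * w₁ s ∂μ) * (∫ s, w₂ s ∂μ)) := by
    have hAB : Integrable (fun p : ℝ × ℝ =>
        g p.1 * w₂ p.1 * w₁ p.2 - g p.1 * w₁ p.1 * w₂ p.2) ν := h1.sub h2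
    have hABC : Integrable (fun p : ℝ × ℝ =>
        g p.1 * w₂ p.1 * w₁ p.2 - g p.1 * w₁ p.1 * w₂ p.2 - w₂ p.1 * (g p.2 * w₁ p.2)) ν :=
      hAB.sub h3
    simp only [hFeq]
    rw [integral_add hABC h4, integral_sub hAB h3, integral_sub h1 h2]
    rw [integral_prod_mul (f := fun s => g s * w₂ s) (g := w₁),
      integral_prod_mul (f := fun s => g s * w₁ s) (g := w₂),
      integral_prod_mul (f := w₂) (g := fun s => g s * w₁ s),
      integral_prod_mul (f := w₁) (g := fun s => g s * w₂ s)]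
    ring
  rw [hval] at hint
  linarith
end

section
/- Let X₁, …, X_n be integrable real-valued random variables on (Ω, 𝓕, ℙ), S = X₁ + ⋯ + X_n, and let γ, γ₁, …, γ_n > 0 with β = (1/γ)/((1/γ) + Σ_j 1/γ_j) and β_i = (1/γ_i)/((1/γ) + Σ_j 1/γ_j). For θ in an interval (a,b), let u_θ and u_{i,θ} be nonnegative measurable functions with E[u_θ(S)] = 1 and E[u_{i,θ}(X_i)] = 1, and set ρ_θ(S) = E[S u_θ(S)] and ρ_{i,θ}(X_i) = E[X_i u_{i,θ}(X_i)], assumed finite. Assume: (i) θ ↦ ρ_θ(S) is continuous on (a,b) with lim_{θ→a⁺} ρ_θ(S) = F_S^{-1+}(0) and lim_{θ→b⁻} ρ_θ(S) = F_S^{-1}(1); and (ii) for each i, θ ↦ ρ_{i,θ}(X_i) is continuous on (a,b) with lim_{θ→a⁺} ρ_{i,θ}(X_i) = F_{X_i}^{-1+}(0) and lim_{θ→b⁻} ρ_{i,θ}(X_i) = F_{X_i}^{-1}(1) (limits in [−∞,+∞]). Define K(θ) = (1−β) ρ_θ(S) + β Σ_{j=1}^n ρ_{j,θ}(X_j). Then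 the open interval (F_S^{-1+}(0), F_S^{-1}(1)) is contained in K((a,b)), there exists a random variable Θ taking values in (a,b) extended by its endpoints (with K extended there by its one-sided limits) such that K(Θ) = S ℙ-almost surely, and the random variables H_i := ρ_{i,Θ}(X_i) − β_i (Σ_{j=1}^n ρ_{j,Θ}(X_j) − ρ_Θ(S)), i = 1, …, n, satisfy Σ_{i=1}^n H_i = S ℙ-almost surely. -/
open MeasureTheory Filter Set

/-- The right quantile of `Z` at level `0` under the measure `μ`,
`F_Z^{-1+}(0) = sup {x : F_Z(x) ≤ 0}` (the essential infimum), as an extended real. -/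
noncomputable def rq0 {Ω : Type*} [MeasurableSpace Ω] (μ : Measure Ω) (Z : Ω → ℝ) : EReal :=
  sSup ((fun x : ℝ => (x : EReal)) '' {x : ℝ | μ {ω | Z ω ≤ x} = 0})

/-- The left quantile of `Z` at level `1` under the measure `μ`,
`F_Z^{-1}(1) = inf {x : ℙ(Z > x) = 0}` (the essential supremum), as an extended real. -/
noncomputable def lq1 {Ω : Type*} [MeasurableSpace Ω] (μ : Measure Ω) (Z : Ω → ℝ) : EReal :=
  sInf ((fun x : ℝ => (x : EReal)) '' {x : ℝ | μ {ω | x < Z ω} = 0})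

/-- The filter of real numbers `θ ∈ (a,b)` tending to the left end-point `a` from the right,
for extended real end-points `a < b`. -/
noncomputable def rightLimFilter (a b : EReal) : Filter ℝ :=
  Filter.comap (fun θ : ℝ => (θ : EReal)) (nhdsWithin a (Set.Ioo a b))

/-- The filter of real numbers `θ ∈ (a,b)` tending to the right end-point `b` from the left,
for extended real end-points `a < b`. -/
noncomputable def leftLimFilter (a b : EReal) : Filter ℝ :=
  Filter.comap (fun θ : ℝ => (θ : EReal)) (nhdsWithin b (Set.Ioo a b))

open Topology

/-!
Extend `θ ↦ K θ` to `[a, b] ⊆ EReal` by its one-sided limits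
`K(a) = (1 - β) ess inf S + β Σⱼ ess inf Xⱼ` and `K(b) = (1 - β) ess sup S + β Σⱼ ess sup Xⱼ`;
it is continuous there. Since `ess inf` is superadditive and `ess sup` subadditive,
`K(a) ≤ ess inf S ≤ S ≤ ess sup S ≤ K(b)` almost surely, so the least `Θ ∈ [a, b]` with
`K(Θ) ≥ S` solves `K(Θ) = S`, and it is a monotone, hence measurable, function of `S`.
The shares sum to `(1 - β) ρ_Θ + β Σⱼ ρ_{j,Θ} = K(Θ)` because `Σᵢ βᵢ = 1 - β`. At an end point
the `EReal` arithmetic stays finite: `K(Θ) = S` forces `ρ_Θ = Σⱼ ρ_{j,Θ} = S` there.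
-/

section FirstPassage

variable {α β : Type*} [CompleteLinearOrder α] [LinearOrder β]

/-- `b` is admitted unconditionally, so that the value lies in `[a, b]` for every level `y`. -/
def firstPassage (a b : α) (F : α → β) (y : β) : α :=
  sInf {x ∈ Icc a b | y ≤ F x ∨ x = b}

variable {a b : α} {F : α → β}

lemma firstPassage_mono : Monotone (firstPassage a b F) :=
  fun _ _ hyy' => sInf_le_sInf fun _ ⟨hx, hF⟩ => ⟨hx, hF.imp_left hyy'.trans⟩

lemma firstPassage_mem_Icc (hab : a ≤ b) (y : β) : firstPassage a b F y ∈ Icc a b :=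
  ⟨le_sInf fun _ hx => hx.1.1, sInf_le ⟨⟨hab, le_rfl⟩, Or.inr rfl⟩⟩

lemma apply_firstPassage [TopologicalSpace α] [OrderTopology α] [DenselyOrdered α]
    [TopologicalSpace β] [OrderClosedTopology β] (hab : a ≤ b) (hF : ContinuousOn F (Icc a b))
    {y : β} (hay : F a ≤ y) (hyb : y ≤ F b) : F (firstPassage a b F y) = y := by
  have hM : {x ∈ Icc a b | y ≤ F x ∨ x = b} = Icc a b ∩ F ⁻¹' Ici y := by
    ext x
    refine and_congr_right fun _ => or_iff_left_of_imp ?_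
    rintro rfl
    exact hyb
  set s := firstPassage a b F y with hs_def
  have hs : s ∈ Icc a b ∩ F ⁻¹' Ici y := by
    rw [hs_def, firstPassage, hM]
    exact (hF.preimage_isClosed_of_isClosed isClosed_Icc isClosed_Ici).sInf_mem
      ⟨b, ⟨hab, le_rfl⟩, hyb⟩
  obtain ⟨⟨has, hsb⟩, hys⟩ := hs
  refine le_antisymm ?_ hys
  rcases has.eq_or_lt with has | has
  · rwa [← has]
  have hlt : ∀ x ∈ Ioo a s, F x ≤ y := fun x hx => by
    by_contra! hxy
    exact (hx.2.trans_le (sInf_le ⟨⟨hx.1.le, (hx.2.trans_le hsb).le⟩, Or.inl hxy.le⟩)).false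
  have := right_nhdsWithin_Ioo_neBot has
  exact le_of_tendsto ((hF s ⟨has.le, hsb⟩).mono fun x hx => ⟨hx.1.le, (hx.2.trans_le hsb).le⟩)
    (eventually_mem_nhdsWithin.mono hlt)

end FirstPassage

namespace EReal

@[norm_cast]
lemma coe_finset_sum {ι : Type*} (s : Finset ι) (f : ι → ℝ) :
    ((∑ i ∈ s, f i : ℝ) : EReal) = ∑ i ∈ s, (f i : EReal) :=
  map_sum (⟨⟨(↑), coe_zero⟩, coe_add⟩ : ℝ →+ EReal) f s

lemma sum_ne_top {ι : Type*} {s : Finset ι} {f : ι → EReal} (h : ∀ i ∈ s, f i ≠ ⊤) :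
    ∑ i ∈ s, f i ≠ ⊤ := by
  classical
  induction s using Finset.induction with
  | empty => simp
  | insert j s hj ih =>
    rw [Finset.sum_insert hj]
    exact (add_lt_top (h j (s.mem_insert_self j))
      (ih fun i hi => h i (Finset.mem_insert_of_mem hi))).ne

lemma sum_ne_bot {ι : Type*} {s : Finset ι} {f : ι → EReal} (h : ∀ i ∈ s, f i ≠ ⊥) :
    ∑ i ∈ s, f i ≠ ⊥ := by
  classical
  induction s using Finset.induction with
  | empty => simp
  | insert j s hj ih =>
    rw [Finset.sum_insert hj]
    exact add_ne_bot_iff.2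
      ⟨h j (s.mem_insert_self j), ih fun i hi => h i (Finset.mem_insert_of_mem hi)⟩

variable {α : Type*} {l : Filter α}

lemma tendsto_finset_sum_of_ne_top {ι : Type*} {s : Finset ι} {f : ι → α → EReal} {L : ι → EReal}
    (hL : ∀ i ∈ s, L i ≠ ⊤) (hf : ∀ i ∈ s, Tendsto (f i) l (𝓝 (L i))) :
    Tendsto (fun x => ∑ i ∈ s, f i x) l (𝓝 (∑ i ∈ s, L i)) := by
  classical
  induction s using Finset.induction with
  | empty => simpa using tendsto_const_nhds
  | insert j s hj ih =>
    simp only [Finset.sum_insert hj]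
    have hLs : ∀ i ∈ s, L i ≠ ⊤ := fun i hi => hL i (Finset.mem_insert_of_mem hi)
    exact (continuousAt_add (.inl (hL j (s.mem_insert_self j))) (.inr (sum_ne_top hLs)))
      |>.tendsto.comp ((hf j (s.mem_insert_self j)).prodMk_nhds
        (ih hLs fun i hi => hf i (Finset.mem_insert_of_mem hi)))

lemma tendsto_finset_sum_of_ne_bot {ι : Type*} {s : Finset ι} {f : ι → α → EReal} {L : ι → EReal}
    (hL : ∀ i ∈ s, L i ≠ ⊥) (hf : ∀ i ∈ s, Tendsto (f i) l (𝓝 (L i))) :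
    Tendsto (fun x => ∑ i ∈ s, f i x) l (𝓝 (∑ i ∈ s, L i)) := by
  classical
  induction s using Finset.induction with
  | empty => simpa using tendsto_const_nhds
  | insert j s hj ih =>
    simp only [Finset.sum_insert hj]
    have hLs : ∀ i ∈ s, L i ≠ ⊥ := fun i hi => hL i (Finset.mem_insert_of_mem hi)
    exact (continuousAt_add (.inr (sum_ne_bot hLs)) (.inl (hL j (s.mem_insert_self j))))
      |>.tendsto.comp ((hf j (s.mem_insert_self j)).prodMk_nhds
        (ih hLs fun i hi => hf i (Finset.mem_insert_of_mem hi)))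

variable {ι : Type*}

lemma tendsto_one_sub_mul_add_mul_sum_of_ne_top [Fintype ι] {c : ℝ}
    (h0 : 0 ≤ c) (h1 : c ≤ 1) {g : α → ℝ} {gi : ι → α → ℝ} {L : EReal} {Li : ι → EReal}
    (hL : L ≠ ⊤) (hLi : ∀ i, Li i ≠ ⊤) (hg : Tendsto (fun x => (g x : EReal)) l (𝓝 L))
    (hgi : ∀ i, Tendsto (fun x => (gi i x : EReal)) l (𝓝 (Li i))) :
    Tendsto (fun x => (((1 - c) * g x + c * ∑ i, gi i x : ℝ) : EReal)) l
      (𝓝 (((1 - c : ℝ) : EReal) * L + c * ∑ i, Li i)) := by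
  have hmul : ∀ {d : ℝ} {x : EReal}, 0 ≤ d → x ≠ ⊤ → (d : EReal) * x ≠ ⊤ := fun hd hx =>
    (mul_ne_top _ _).2 ⟨.inl (coe_ne_bot _), .inl (EReal.coe_nonneg.2 hd), .inl (coe_ne_top _),
      .inr hx⟩
  have hA := Tendsto.const_mul hg (a := ((1 - c : ℝ) : EReal)) (.inl (coe_ne_bot _))
    (.inl (coe_ne_top _))
  have hB := Tendsto.const_mul (a := (c : EReal))
    (tendsto_finset_sum_of_ne_top (s := .univ) (fun i _ => hLi i) fun i _ => hgi i)
    (.inl (coe_ne_bot _)) (.inl (coe_ne_top _))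
  push_cast
  exact (continuousAt_add (p := (_, _)) (.inl (hmul (_root_.sub_nonneg.2 h1) hL))
    (.inr (hmul h0 (sum_ne_top fun i _ => hLi i)))).tendsto.comp (hA.prodMk_nhds hB)

lemma tendsto_one_sub_mul_add_mul_sum_of_ne_bot [Fintype ι] {c : ℝ}
    (h0 : 0 ≤ c) (h1 : c ≤ 1) {g : α → ℝ} {gi : ι → α → ℝ} {L : EReal} {Li : ι → EReal}
    (hL : L ≠ ⊥) (hLi : ∀ i, Li i ≠ ⊥) (hg : Tendsto (fun x => (g x : EReal)) l (𝓝 L))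
    (hgi : ∀ i, Tendsto (fun x => (gi i x : EReal)) l (𝓝 (Li i))) :
    Tendsto (fun x => (((1 - c) * g x + c * ∑ i, gi i x : ℝ) : EReal)) l
      (𝓝 (((1 - c : ℝ) : EReal) * L + c * ∑ i, Li i)) := by
  have hmul : ∀ {d : ℝ} {x : EReal}, 0 ≤ d → x ≠ ⊥ → (d : EReal) * x ≠ ⊥ := fun hd hx =>
    (mul_ne_bot _ _).2 ⟨.inl (coe_ne_bot _), .inr hx, .inl (coe_ne_top _),
      .inl (EReal.coe_nonneg.2 hd)⟩
  have hA := Tendsto.const_mul hg (a := ((1 - c : ℝ) : EReal)) (.inl (coe_ne_bot _))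
    (.inl (coe_ne_top _))
  have hB := Tendsto.const_mul (a := (c : EReal))
    (tendsto_finset_sum_of_ne_bot (s := .univ) (fun i _ => hLi i) fun i _ => hgi i)
    (.inl (coe_ne_bot _)) (.inl (coe_ne_top _))
  push_cast
  exact (continuousAt_add (p := (_, _)) (.inr (hmul h0 (sum_ne_bot fun i _ => hLi i)))
    (.inl (hmul (_root_.sub_nonneg.2 h1) hL))).tendsto.comp (hA.prodMk_nhds hB)

variable {c : ℝ}

lemma one_sub_mul_add_mul_self (h0 : 0 ≤ c) (h1 : c ≤ 1) (x : EReal) :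
    ((1 - c : ℝ) : EReal) * x + c * x = x := by
  rw [← right_distrib_of_nonneg (EReal.coe_nonneg.2 (_root_.sub_nonneg.2 h1))
    (EReal.coe_nonneg.2 h0), ← coe_add, _root_.sub_add_cancel, coe_one, one_mul]

lemma one_sub_mul_add_mul_le (h0 : 0 ≤ c) (h1 : c ≤ 1) {u v : EReal} (hvu : v ≤ u) :
    ((1 - c : ℝ) : EReal) * u + c * v ≤ u :=
  (add_le_add le_rfl (mul_le_mul_of_nonneg_left hvu (EReal.coe_nonneg.2 h0))).trans_eq
    (one_sub_mul_add_mul_self h0 h1 u)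

lemma le_one_sub_mul_add_mul (h0 : 0 ≤ c) (h1 : c ≤ 1) {u v : EReal} (huv : u ≤ v) :
    u ≤ ((1 - c : ℝ) : EReal) * u + c * v :=
  (one_sub_mul_add_mul_self h0 h1 u).symm.trans_le
    (add_le_add le_rfl (mul_le_mul_of_nonneg_left huv (EReal.coe_nonneg.2 h0)))

lemma eq_of_one_sub_mul_add_mul_eq (hc : 0 < c) {y : ℝ} {v : EReal}
    (h : ((1 - c : ℝ) : EReal) * y + c * v = y) : v = y := by
  induction v with
  | bot => rw [coe_mul_bot_of_pos hc, add_bot] at h; exact (bot_ne_coe y h).elim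
  | top => rw [coe_mul_top_of_pos hc, ← coe_mul, coe_add_top] at h; exact (top_ne_coe y h).elim
  | coe v =>
    norm_cast at h ⊢
    nlinarith

lemma eq_of_one_sub_mul_add_mul_eq_of_le (hc0 : 0 < c) (hc1 : c ≤ 1) {u v : EReal} {y : ℝ}
    (hvu : v ≤ u) (huy : u ≤ y) (h : ((1 - c : ℝ) : EReal) * u + c * v = y) : u = y ∧ v = y := by
  have hu : u = y := le_antisymm huy (h ▸ one_sub_mul_add_mul_le hc0.le hc1 hvu)
  exact ⟨hu, eq_of_one_sub_mul_add_mul_eq hc0 (hu ▸ h)⟩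

lemma eq_of_one_sub_mul_add_mul_eq_of_ge (hc0 : 0 < c) (hc1 : c ≤ 1) {u v : EReal} {y : ℝ}
    (hyu : y ≤ u) (huv : u ≤ v) (h : ((1 - c : ℝ) : EReal) * u + c * v = y) : u = y ∧ v = y := by
  have hu : u = y := le_antisymm (h ▸ le_one_sub_mul_add_mul hc0.le hc1 huv) hyu
  exact ⟨hu, eq_of_one_sub_mul_add_mul_eq hc0 (hu ▸ h)⟩

lemma sum_sub_mul_sum_sub_eq_of_eq [Fintype ι] (w : ι → ℝ) {R : EReal} {Ri : ι → EReal} {y : ℝ}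
    (hR : R = y) (hRi : ∑ i, Ri i = y) : ∑ i, (Ri i - w i * (∑ j, Ri j - R)) = y := by
  rw [hR, hRi, ← coe_sub, _root_.sub_self, coe_zero]
  simpa using hRi

lemma eq_or_eq_or_exists_coe_of_mem_Icc {a b x : EReal} (hx : x ∈ Icc a b) :
    x = a ∨ x = b ∨ ∃ θ : ℝ, (θ : EReal) ∈ Ioo a b ∧ x = θ := by
  rcases hx.1.eq_or_lt with rfl | hax
  · exact .inl rfl
  rcases hx.2.eq_or_lt with rfl | hxb
  · exact .inr (.inl rfl)
  lift x to ℝ using ⟨(hxb.trans_le le_top).ne, (bot_le.trans_lt hax).ne'⟩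
  exact .inr (.inr ⟨x, ⟨hax, hxb⟩, rfl⟩)

end EReal

lemma sum_sub_mul_sum_sub_eq {ι : Type*} [Fintype ι] {β : ℝ} {βi : ι → ℝ}
    (hβi : ∑ i, βi i = 1 - β) (R : ℝ) (Ri : ι → ℝ) :
    ∑ i, (Ri i - βi i * (∑ j, Ri j - R)) = (1 - β) * R + β * ∑ i, Ri i := by
  rw [Finset.sum_sub_distrib, ← Finset.sum_mul, hβi]
  ring

lemma div_add_sum_weights {ι : Type*} [Fintype ι] {p : ℝ} {q : ι → ℝ} (hp : 0 < p)
    (hq : ∀ i, 0 ≤ q i) :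
    0 < p / (p + ∑ j, q j) ∧ p / (p + ∑ j, q j) ≤ 1 ∧
      ∑ i, q i / (p + ∑ j, q j) = 1 - p / (p + ∑ j, q j) := by
  have hq' : 0 ≤ ∑ j, q j := Finset.sum_nonneg fun j _ => hq j
  have hD : 0 < p + ∑ j, q j := add_pos_of_pos_of_nonneg hp hq'
  refine ⟨div_pos hp hD, (div_le_one hD).2 (by linarith), ?_⟩
  rw [← Finset.sum_div, eq_sub_iff_add_eq, ← add_div, add_comm, div_self hD.ne']

section Quantile

variable {Ω : Type*} [MeasurableSpace Ω] {μ : Measure Ω}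

lemma rq0_eq_essInf (Z : Ω → ℝ) : rq0 μ Z = essInf (fun ω => (Z ω : EReal)) μ := by
  refine le_antisymm (sSup_le ?_) ?_
  · rintro _ ⟨x, hx, rfl⟩
    refine le_essInf_of_ae_le _ (measure_mono_null (fun ω hω => ?_) hx)
    exact (EReal.coe_lt_coe_iff.1 (not_le.1 hω)).le
  · rw [essInf_eq_sSup]
    refine sSup_le fun c hc => EReal.ge_of_forall_gt_iff_ge.1 fun x hx => le_sSup ⟨x, ?_, rfl⟩
    exact measure_mono_null (fun ω hω => (EReal.coe_le_coe_iff.2 hω).trans_lt hx) hc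

lemma lq1_eq_essSup (Z : Ω → ℝ) : lq1 μ Z = essSup (fun ω => (Z ω : EReal)) μ := by
  refine le_antisymm ?_ (le_sInf ?_)
  · rw [essSup_eq_sInf]
    refine le_sInf fun c hc => EReal.le_of_forall_lt_iff_le.1 fun x hx => sInf_le ⟨x, ?_, rfl⟩
    exact measure_mono_null (fun ω hω => hx.trans (EReal.coe_lt_coe_iff.2 hω)) hc
  · rintro _ ⟨x, hx, rfl⟩
    refine essSup_le_of_ae_le _ (measure_mono_null (fun ω hω => ?_) hx)
    exact EReal.coe_lt_coe_iff.1 (not_le.1 hω)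

variable (μ)

lemma ae_rq0_le (Z : Ω → ℝ) : ∀ᵐ ω ∂μ, rq0 μ Z ≤ Z ω := by
  rw [rq0_eq_essInf]
  exact ae_essInf_le

lemma ae_le_lq1 (Z : Ω → ℝ) : ∀ᵐ ω ∂μ, (Z ω : EReal) ≤ lq1 μ Z := by
  rw [lq1_eq_essSup]
  exact ae_le_essSup

lemma rq0_ne_top [NeZero μ] (Z : Ω → ℝ) : rq0 μ Z ≠ ⊤ :=
  let ⟨_, h⟩ := (ae_rq0_le μ Z).exists
  ne_top_of_le_ne_top (EReal.coe_ne_top _) h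

lemma lq1_ne_bot [NeZero μ] (Z : Ω → ℝ) : lq1 μ Z ≠ ⊥ :=
  let ⟨_, h⟩ := (ae_le_lq1 μ Z).exists
  ne_bot_of_le_ne_bot (EReal.coe_ne_bot _) h

variable {ι : Type*} [Fintype ι] (X : ι → Ω → ℝ)

lemma sum_rq0_le_rq0_sum : ∑ i, rq0 μ (X i) ≤ rq0 μ (fun ω => ∑ i, X i ω) := by
  rw [rq0_eq_essInf]
  refine le_essInf_of_ae_le _ ?_
  filter_upwards [ae_all_iff.2 fun i => ae_rq0_le μ (X i)] with ω hω
  push_cast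
  exact Finset.sum_le_sum fun i _ => hω i

lemma lq1_sum_le_sum_lq1 : lq1 μ (fun ω => ∑ i, X i ω) ≤ ∑ i, lq1 μ (X i) := by
  rw [lq1_eq_essSup]
  refine essSup_le_of_ae_le _ ?_
  filter_upwards [ae_all_iff.2 fun i => ae_le_lq1 μ (X i)] with ω hω
  push_cast
  exact Finset.sum_le_sum fun i _ => hω i

end Quantile

section ExtendEnds

noncomputable def extendEnds (a b A B : EReal) (f : ℝ → ℝ) (x : EReal) : EReal :=
  if x = a then A else if x = b then B else (f x.toReal : EReal)

variable {a b A B : EReal} {f : ℝ → ℝ}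

lemma extendEnds_left : extendEnds a b A B f a = A := if_pos rfl

lemma extendEnds_right (hab : a < b) : extendEnds a b A B f b = B := by
  simp [extendEnds, hab.ne']

lemma extendEnds_coe {θ : ℝ} (hθ : (θ : EReal) ∈ Ioo a b) : extendEnds a b A B f θ = f θ := by
  simp [extendEnds, hθ.1.ne', hθ.2.ne]

lemma tendsto_extendEnds {L l : Filter EReal} (hL : Ioo a b ∈ L)
    (hf : Tendsto (fun θ : ℝ => (f θ : EReal)) (comap (↑) L) l) :
    Tendsto (extendEnds a b A B f) L l := by
  have hrange : range ((↑) : ℝ → EReal) ∈ L := mem_of_superset hL fun x hx =>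
    ⟨x.toReal, EReal.coe_toReal (hx.2.trans_le le_top).ne (bot_le.trans_lt hx.1).ne'⟩
  refine (tendsto_comap'_iff hrange).1 (hf.congr' ?_)
  filter_upwards [preimage_mem_comap hL] with θ hθ using (extendEnds_coe hθ).symm

lemma continuousOn_extendEnds (hab : a < b) (hf : ContinuousOn f {θ : ℝ | (θ : EReal) ∈ Ioo a b})
    (hA : Tendsto (fun θ => (f θ : EReal)) (rightLimFilter a b) (𝓝 A))
    (hB : Tendsto (fun θ => (f θ : EReal)) (leftLimFilter a b) (𝓝 B)) :
    ContinuousOn (extendEnds a b A B f) (Icc a b) := by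
  intro x ⟨hax, hxb⟩
  rcases hax.eq_or_lt with rfl | hax
  · refine (continuousWithinAt_Icc_iff_Ici hab).2 (continuousWithinAt_Ioi_iff_Ici.1
      ((continuousWithinAt_Ioo_iff_Ioi hab).1 ?_))
    rw [ContinuousWithinAt, extendEnds_left]
    exact tendsto_extendEnds self_mem_nhdsWithin hA
  rcases hxb.eq_or_lt with rfl | hxb
  · refine (continuousWithinAt_Icc_iff_Iic hax).2 (continuousWithinAt_Iio_iff_Iic.1
      ((continuousWithinAt_Ioo_iff_Iio hax).1 ?_))
    rw [ContinuousWithinAt, extendEnds_right hax]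
    exact tendsto_extendEnds self_mem_nhdsWithin hB
  lift x to ℝ using ⟨(hxb.trans_le le_top).ne, (bot_le.trans_lt hax).ne'⟩
  have hI : Ioo a b ∈ 𝓝 (x : EReal) := isOpen_Ioo.mem_nhds ⟨hax, hxb⟩
  have hfx : ContinuousAt f x :=
    hf.continuousAt (continuous_coe_real_ereal.continuousAt.preimage_mem_nhds hI)
  refine ContinuousAt.continuousWithinAt ?_
  rw [ContinuousAt, extendEnds_coe ⟨hax, hxb⟩]
  refine tendsto_extendEnds hI ?_
  rw [← EReal.isEmbedding_coe.isInducing.nhds_eq_comap]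
  exact continuous_coe_real_ereal.continuousAt.tendsto.comp hfx

end ExtendEnds

section Capital

variable {ι : Type*} [Fintype ι] {a b L M : EReal} {Li Mi : ι → EReal} {c : ℝ} {g : ℝ → ℝ}
  {gi : ι → ℝ → ℝ}

lemma extendEnds_one_sub_mul_add_mul_sum (hab : a < b) {x : EReal} (hx : x ∈ Icc a b) :
    extendEnds a b (((1 - c : ℝ) : EReal) * L + c * ∑ i, Li i)
      (((1 - c : ℝ) : EReal) * M + c * ∑ i, Mi i) (fun θ => (1 - c) * g θ + c * ∑ i, gi i θ) x
    = ((1 - c : ℝ) : EReal) * extendEnds a b L M g x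
      + c * ∑ i, extendEnds a b (Li i) (Mi i) (gi i) x := by
  rcases EReal.eq_or_eq_or_exists_coe_of_mem_Icc hx with rfl | rfl | ⟨θ, hθ, rfl⟩
  · simp only [extendEnds_left]
  · simp only [extendEnds_right hab]
  · simp only [extendEnds_coe hθ]
    push_cast
    rfl

lemma continuousOn_extendEnds_one_sub_mul_add_mul_sum (hab : a < b) (h0 : 0 ≤ c) (h1 : c ≤ 1)
    (hg : ContinuousOn g {θ : ℝ | (θ : EReal) ∈ Ioo a b})
    (hgi : ∀ i, ContinuousOn (gi i) {θ : ℝ | (θ : EReal) ∈ Ioo a b})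
    (hL : L ≠ ⊤) (hLi : ∀ i, Li i ≠ ⊤) (hM : M ≠ ⊥) (hMi : ∀ i, Mi i ≠ ⊥)
    (hgL : Tendsto (fun θ => (g θ : EReal)) (rightLimFilter a b) (𝓝 L))
    (hgiL : ∀ i, Tendsto (fun θ => (gi i θ : EReal)) (rightLimFilter a b) (𝓝 (Li i)))
    (hgM : Tendsto (fun θ => (g θ : EReal)) (leftLimFilter a b) (𝓝 M))
    (hgiM : ∀ i, Tendsto (fun θ => (gi i θ : EReal)) (leftLimFilter a b) (𝓝 (Mi i))) :
    ContinuousOn (extendEnds a b (((1 - c : ℝ) : EReal) * L + c * ∑ i, Li i)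
      (((1 - c : ℝ) : EReal) * M + c * ∑ i, Mi i) (fun θ => (1 - c) * g θ + c * ∑ i, gi i θ))
      (Icc a b) :=
  continuousOn_extendEnds hab ((continuousOn_const.mul hg).add
      (continuousOn_const.mul (continuousOn_finsetSum _ fun i _ => hgi i)))
    (EReal.tendsto_one_sub_mul_add_mul_sum_of_ne_top h0 h1 hL hLi hgL hgiL)
    (EReal.tendsto_one_sub_mul_add_mul_sum_of_ne_bot h0 h1 hM hMi hgM hgiM)

lemma sum_sub_mul_sum_sub_extendEnds_eq (hab : a < b) (hc0 : 0 < c) (hc1 : c ≤ 1) {w : ι → ℝ}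
    (hw : ∑ i, w i = 1 - c) (hLi : ∑ i, Li i ≤ L) (hMi : M ≤ ∑ i, Mi i) {y : ℝ} (hLy : L ≤ y)
    (hyM : y ≤ M) {x : EReal} (hx : x ∈ Icc a b)
    (h : ((1 - c : ℝ) : EReal) * extendEnds a b L M g x
      + c * ∑ i, extendEnds a b (Li i) (Mi i) (gi i) x = y) :
    ∑ i, (extendEnds a b (Li i) (Mi i) (gi i) x - w i
      * (∑ j, extendEnds a b (Li j) (Mi j) (gi j) x - extendEnds a b L M g x)) = y := by
  rcases EReal.eq_or_eq_or_exists_coe_of_mem_Icc hx with rfl | rfl | ⟨θ, hθ, rfl⟩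
  · simp only [extendEnds_left] at h ⊢
    obtain ⟨hL, hLi⟩ := EReal.eq_of_one_sub_mul_add_mul_eq_of_le hc0 hc1 hLi hLy h
    exact EReal.sum_sub_mul_sum_sub_eq_of_eq w hL hLi
  · simp only [extendEnds_right hab] at h ⊢
    obtain ⟨hM, hMi⟩ := EReal.eq_of_one_sub_mul_add_mul_eq_of_ge hc0 hc1 hyM hMi h
    exact EReal.sum_sub_mul_sum_sub_eq_of_eq w hM hMi
  · simp only [extendEnds_coe hθ] at h ⊢
    norm_cast at h ⊢
    rwa [sum_sub_mul_sum_sub_eq hw]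

lemma exists_coe_mem_Ioo_eq_of_extendEnds_eq {A B : EReal} {f : ℝ → ℝ} (hab : a < b)
    {x : EReal} (hx : x ∈ Icc a b) {y : ℝ} (h : extendEnds a b A B f x = y) (hA : A < y)
    (hB : y < B) : ∃ θ : ℝ, (θ : EReal) ∈ Ioo a b ∧ f θ = y := by
  rcases EReal.eq_or_eq_or_exists_coe_of_mem_Icc hx with rfl | rfl | ⟨θ, hθ, rfl⟩
  · exact absurd (extendEnds_left.symm.trans h) hA.ne
  · exact absurd ((extendEnds_right hab).symm.trans h) hB.ne'
  · exact ⟨θ, hθ, EReal.coe_injective ((extendEnds_coe hθ).symm.trans h)⟩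

end Capital

theorem stmt14_general {Ω : Type*} [MeasurableSpace Ω] (P : Measure Ω) [IsProbabilityMeasure P]
    (n : ℕ) (X : Fin n → Ω → ℝ) (hXmeas : ∀ i, Measurable (X i))
    (S : Ω → ℝ) (hSdef : S = fun ω => ∑ i, X i ω)
    (γ : ℝ) (γi : Fin n → ℝ) (hγ : 0 < γ) (hγi : ∀ i, 0 < γi i)
    (β : ℝ) (βi : Fin n → ℝ)
    (hβ : β = (1/γ) / (1/γ + ∑ j, 1/γi j))
    (hβi : ∀ i, βi i = (1/γi i) / (1/γ + ∑ j, 1/γi j))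
    (a b : EReal) (hab : a < b)
    (ρS : ℝ → ℝ)
    (ρX : Fin n → ℝ → ℝ)
    (hρS_cont : ContinuousOn ρS {θ : ℝ | (θ : EReal) ∈ Set.Ioo a b})
    (hρS_lima : Filter.Tendsto (fun θ : ℝ => ((ρS θ : ℝ) : EReal)) (rightLimFilter a b)
      (nhds (rq0 P S)))
    (hρS_limb : Filter.Tendsto (fun θ : ℝ => ((ρS θ : ℝ) : EReal)) (leftLimFilter a b)
      (nhds (lq1 P S)))
    (hρX_cont : ∀ i, ContinuousOn (ρX i) {θ : ℝ | (θ : EReal) ∈ Set.Ioo a b})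
    (hρX_lima : ∀ i, Filter.Tendsto (fun θ : ℝ => ((ρX i θ : ℝ) : EReal))
      (rightLimFilter a b) (nhds (rq0 P (X i))))
    (hρX_limb : ∀ i, Filter.Tendsto (fun θ : ℝ => ((ρX i θ : ℝ) : EReal))
      (leftLimFilter a b) (nhds (lq1 P (X i))))
    (K : ℝ → ℝ) (hK : ∀ θ, K θ = (1 - β) * ρS θ + β * ∑ j, ρX j θ) :
    (∀ y : ℝ, rq0 P S < (y : EReal) → (y : EReal) < lq1 P S →
      ∃ θ : ℝ, (θ : EReal) ∈ Set.Ioo a b ∧ K θ = y) ∧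
    ∃ (Θ : Ω → EReal) (r : EReal → EReal) (ri : Fin n → EReal → EReal),
      Measurable Θ ∧ (∀ ω, Θ ω ∈ Set.Icc a b) ∧
      (∀ θ : ℝ, (θ : EReal) ∈ Set.Ioo a b →
        r (θ : EReal) = ((ρS θ : ℝ) : EReal) ∧
        ∀ i, ri i (θ : EReal) = ((ρX i θ : ℝ) : EReal)) ∧
      r a = rq0 P S ∧ r b = lq1 P S ∧
      (∀ i, ri i a = rq0 P (X i) ∧ ri i b = lq1 P (X i)) ∧
      (∀ᵐ ω ∂P, ((1 - β : ℝ) : EReal) * r (Θ ω) + ((β : ℝ) : EReal) * ∑ j, ri j (Θ ω)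
        = ((S ω : ℝ) : EReal)) ∧
      (∀ᵐ ω ∂P, (∑ i, (ri i (Θ ω) - ((βi i : ℝ) : EReal) * ((∑ j, ri j (Θ ω)) - r (Θ ω))))
        = ((S ω : ℝ) : EReal)) := by
  obtain ⟨hβ0, hβ1, hβi_sum⟩ : 0 < β ∧ β ≤ 1 ∧ ∑ i, βi i = 1 - β := by
    simp only [hβ, hβi]
    exact div_add_sum_weights (one_div_pos.2 hγ) fun j => (one_div_pos.2 (hγi j)).le
  obtain rfl : K = fun θ => (1 - β) * ρS θ + β * ∑ j, ρX j θ := funext hK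
  set r := extendEnds a b (rq0 P S) (lq1 P S) ρS
  set ri := fun i => extendEnds a b (rq0 P (X i)) (lq1 P (X i)) (ρX i)
  set Kx := extendEnds a b (((1 - β : ℝ) : EReal) * rq0 P S + β * ∑ j, rq0 P (X j))
    (((1 - β : ℝ) : EReal) * lq1 P S + β * ∑ j, lq1 P (X j))
    (fun θ => (1 - β) * ρS θ + β * ∑ j, ρX j θ)
  have hKcont : ContinuousOn Kx (Icc a b) :=
    continuousOn_extendEnds_one_sub_mul_add_mul_sum hab hβ0.le hβ1 hρS_cont hρX_cont
      (rq0_ne_top P S) (fun i => rq0_ne_top P (X i)) (lq1_ne_bot P S) (fun i => lq1_ne_bot P (X i))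
      hρS_lima hρX_lima hρS_limb hρX_limb
  have hrq0 : ∑ j, rq0 P (X j) ≤ rq0 P S := hSdef ▸ sum_rq0_le_rq0_sum P X
  have hlq1 : lq1 P S ≤ ∑ j, lq1 P (X j) := hSdef ▸ lq1_sum_le_sum_lq1 P X
  have hKa := EReal.one_sub_mul_add_mul_le hβ0.le hβ1 hrq0
  have hKb := EReal.le_one_sub_mul_add_mul hβ0.le hβ1 hlq1
  have hmem : ∀ y, firstPassage a b Kx y ∈ Icc a b := firstPassage_mem_Icc hab.le
  have hsel : ∀ y : ℝ, rq0 P S ≤ y → (y : EReal) ≤ lq1 P S →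
      ((1 - β : ℝ) : EReal) * r (firstPassage a b Kx y) + β * ∑ j, ri j (firstPassage a b Kx y)
        = y := fun y hy hy' =>
    (extendEnds_one_sub_mul_add_mul_sum hab (hmem y)).symm.trans <| apply_firstPassage hab.le
      hKcont (extendEnds_left.trans_le (hKa.trans hy))
      (hy'.trans (hKb.trans_eq (extendEnds_right hab).symm))
  have hSmeas : Measurable S := hSdef ▸ Finset.measurable_sum _ fun i _ => hXmeas i
  refine ⟨fun y hlo hhi => ?_, fun ω => firstPassage a b Kx (S ω), r, ri,
    (firstPassage_mono (a := a) (b := b) (F := Kx)).measurable.comp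
      (measurable_coe_real_ereal.comp hSmeas), fun ω => hmem _,
    fun θ hθ => ⟨extendEnds_coe hθ, fun i => extendEnds_coe hθ⟩, extendEnds_left,
    extendEnds_right hab, fun i => ⟨extendEnds_left, extendEnds_right hab⟩, ?_, ?_⟩
  · exact exists_coe_mem_Ioo_eq_of_extendEnds_eq hab (hmem y)
      ((extendEnds_one_sub_mul_add_mul_sum hab (hmem y)).trans (hsel y hlo.le hhi.le))
      (hKa.trans_lt hlo) (hhi.trans_le hKb)
  · filter_upwards [ae_rq0_le P S, ae_le_lq1 P S] with ω hlo hhi using hsel _ hlo hhi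
  · filter_upwards [ae_rq0_le P S, ae_le_lq1 P S] with ω hlo hhi
    exact sum_sub_mul_sum_sub_extendEnds_eq hab hβ0 hβ1 hβi_sum hrq0 hlq1 hlo hhi (hmem _)
      (hsel _ hlo hhi)

/-- (Proposition 5.3 of the paper, holistic principle.) Under continuity on
`(a,b)` and the stated boundary limits of `ρ_θ(S) = E[S u_θ(S)]` and
`ρ_{i,θ}(X_i) = E[X_i u_{i,θ}(X_i)]`, the endogenous aggregate capital
`K(θ) = (1−β) ρ_θ(S) + β Σ_j ρ_{j,θ}(X_j)` covers the open interval
`(F_S^{-1+}(0), F_S^{-1}(1))`, and there exist a parameter sampling random variable `Θ`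
valued in `[a,b]` (with the risk measures extended to the end-points by their one-sided
limits) with `K(Θ) = S` a.s., such that the holistic shares
`H_i = ρ_{i,Θ}(X_i) − β_i (Σ_j ρ_{j,Θ}(X_j) − ρ_Θ(S))` sum to `S` a.s. -/
theorem stmt14 {Ω : Type*} [MeasurableSpace Ω] (P : Measure Ω) [IsProbabilityMeasure P]
    (n : ℕ) (X : Fin n → Ω → ℝ) (hXmeas : ∀ i, Measurable (X i))
    (hXint : ∀ i, Integrable (X i) P)
    (S : Ω → ℝ) (hSdef : S = fun ω => ∑ i, X i ω)
    (γ : ℝ) (γi : Fin n → ℝ) (hγ : 0 < γ) (hγi : ∀ i, 0 < γi i)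
    (β : ℝ) (βi : Fin n → ℝ)
    (hβ : β = (1/γ) / (1/γ + ∑ j, 1/γi j))
    (hβi : ∀ i, βi i = (1/γi i) / (1/γ + ∑ j, 1/γi j))
    (a b : EReal) (hab : a < b)
    (u : ℝ → ℝ → ℝ) (ui : Fin n → ℝ → ℝ → ℝ)
    (hu_meas : ∀ θ : ℝ, (θ : EReal) ∈ Set.Ioo a b → Measurable (u θ))
    (hu_nonneg : ∀ θ : ℝ, (θ : EReal) ∈ Set.Ioo a b → ∀ s, 0 ≤ u θ s)
    (hu_mean : ∀ θ : ℝ, (θ : EReal) ∈ Set.Ioo a b →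
      Integrable (fun ω => u θ (S ω)) P ∧ ∫ ω, u θ (S ω) ∂P = 1)
    (hui_meas : ∀ i, ∀ θ : ℝ, (θ : EReal) ∈ Set.Ioo a b → Measurable (ui i θ))
    (hui_nonneg : ∀ i, ∀ θ : ℝ, (θ : EReal) ∈ Set.Ioo a b → ∀ s, 0 ≤ ui i θ s)
    (hui_mean : ∀ i, ∀ θ : ℝ, (θ : EReal) ∈ Set.Ioo a b →
      Integrable (fun ω => ui i θ (X i ω)) P ∧ ∫ ω, ui i θ (X i ω) ∂P = 1)
    (ρS : ℝ → ℝ) (hρS : ∀ θ, ρS θ = ∫ ω, S ω * u θ (S ω) ∂P)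
    (ρX : Fin n → ℝ → ℝ) (hρX : ∀ i θ, ρX i θ = ∫ ω, X i ω * ui i θ (X i ω) ∂P)
    (hρS_int : ∀ θ : ℝ, (θ : EReal) ∈ Set.Ioo a b →
      Integrable (fun ω => S ω * u θ (S ω)) P)
    (hρX_int : ∀ i, ∀ θ : ℝ, (θ : EReal) ∈ Set.Ioo a b →
      Integrable (fun ω => X i ω * ui i θ (X i ω)) P)
    (hρS_cont : ContinuousOn ρS {θ : ℝ | (θ : EReal) ∈ Set.Ioo a b})
    (hρS_lima : Filter.Tendsto (fun θ : ℝ => ((ρS θ : ℝ) : EReal)) (rightLimFilter a b)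
      (nhds (rq0 P S)))
    (hρS_limb : Filter.Tendsto (fun θ : ℝ => ((ρS θ : ℝ) : EReal)) (leftLimFilter a b)
      (nhds (lq1 P S)))
    (hρX_cont : ∀ i, ContinuousOn (ρX i) {θ : ℝ | (θ : EReal) ∈ Set.Ioo a b})
    (hρX_lima : ∀ i, Filter.Tendsto (fun θ : ℝ => ((ρX i θ : ℝ) : EReal))
      (rightLimFilter a b) (nhds (rq0 P (X i))))
    (hρX_limb : ∀ i, Filter.Tendsto (fun θ : ℝ => ((ρX i θ : ℝ) : EReal))
      (leftLimFilter a b) (nhds (lq1 P (X i))))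
    (K : ℝ → ℝ) (hK : ∀ θ, K θ = (1 - β) * ρS θ + β * ∑ j, ρX j θ) :
    (∀ y : ℝ, rq0 P S < (y : EReal) → (y : EReal) < lq1 P S →
      ∃ θ : ℝ, (θ : EReal) ∈ Set.Ioo a b ∧ K θ = y) ∧
    ∃ (Θ : Ω → EReal) (r : EReal → EReal) (ri : Fin n → EReal → EReal),
      Measurable Θ ∧ (∀ ω, Θ ω ∈ Set.Icc a b) ∧
      (∀ θ : ℝ, (θ : EReal) ∈ Set.Ioo a b →
        r (θ : EReal) = ((ρS θ : ℝ) : EReal) ∧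
        ∀ i, ri i (θ : EReal) = ((ρX i θ : ℝ) : EReal)) ∧
      r a = rq0 P S ∧ r b = lq1 P S ∧
      (∀ i, ri i a = rq0 P (X i) ∧ ri i b = lq1 P (X i)) ∧
      (∀ᵐ ω ∂P, ((1 - β : ℝ) : EReal) * r (Θ ω) + ((β : ℝ) : EReal) * ∑ j, ri j (Θ ω)
        = ((S ω : ℝ) : EReal)) ∧
      (∀ᵐ ω ∂P, (∑ i, (ri i (Θ ω) - ((βi i : ℝ) : EReal) * ((∑ j, ri j (Θ ω)) - r (Θ ω))))
        = ((S ω : ℝ) : EReal)) :=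
  stmt14_general P n X hXmeas S hSdef γ γi hγ hγi β βi hβ hβi a b hab ρS ρX hρS_cont hρS_lima
    hρS_limb hρX_cont hρX_lima hρX_limb K hK
end

section
/- Let n ≥ 1, let γ, γ₁, …, γ_n > 0, let a, a₁, …, a_n ∈ ℝ, and set β_i = (1/γ_i)/((1/γ) + Σ_{j=1}^n 1/γ_j) and β = (1/γ)/((1/γ) + Σ_{j=1}^n 1/γ_j). Then the function f(K₁, …, K_n) = Σ_{i=1}^n γ_i (K_i − a_i)² + γ (Σ_{j=1}^n K_j − a)² on ℝⁿ has a unique global minimizer, given by K_i* = a_i − β_i (Σ_{j=1}^n a_j − a) for i = 1, …, n, and the minimizer satisfies Σ_{i=1}^n K_i* = a + β (Σ_{j=1}^n a_j − a). -/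
/-- (Holistic quadratic optimization.) For positive weights `γ, γ_i` and
reals `a, a_i`, the function
`f(K₁,…,K_n) = Σ_i γ_i (K_i − a_i)² + γ (Σ_j K_j − a)²` has the unique global minimizer
`K_i* = a_i − β_i (Σ_j a_j − a)`, which satisfies `Σ_i K_i* = a + β (Σ_j a_j − a)`. -/
theorem stmt16 (n : ℕ) (hn : 1 ≤ n)
    (γ : ℝ) (γi : Fin n → ℝ) (hγ : 0 < γ) (hγi : ∀ i, 0 < γi i)
    (a : ℝ) (ai : Fin n → ℝ) (β : ℝ) (βi : Fin n → ℝ)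
    (hβ : β = (1/γ) / (1/γ + ∑ j, 1/γi j))
    (hβi : ∀ i, βi i = (1/γi i) / (1/γ + ∑ j, 1/γi j))
    (Kstar : Fin n → ℝ)
    (hKstar : ∀ i, Kstar i = ai i - βi i * ((∑ j, ai j) - a)) :
    (∀ Kv : Fin n → ℝ,
      (∑ i, γi i * (Kstar i - ai i) ^ 2) + γ * ((∑ j, Kstar j) - a) ^ 2 ≤
        (∑ i, γi i * (Kv i - ai i) ^ 2) + γ * ((∑ j, Kv j) - a) ^ 2) ∧
    (∀ Kv : Fin n → ℝ,
      ((∑ i, γi i * (Kv i - ai i) ^ 2) + γ * ((∑ j, Kv j) - a) ^ 2 =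
        (∑ i, γi i * (Kstar i - ai i) ^ 2) + γ * ((∑ j, Kstar j) - a) ^ 2) →
      Kv = Kstar) ∧
    (∑ i, Kstar i = a + β * ((∑ j, ai j) - a)) := by
  set D : ℝ := 1/γ + ∑ j, 1/γi j with hD
  have hDpos : 0 < D := by
    apply add_pos_of_pos_of_nonneg (by positivity)
    exact Finset.sum_nonneg fun j _ => one_div_nonneg.mpr (hγi j).le
  have hDne : D ≠ 0 := hDpos.ne'
  set c : ℝ := (∑ j, ai j) - a with hc
  -- key pointwise fact
  have hKa : ∀ i, γi i * (Kstar i - ai i) = -(c/D) := by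
    intro i
    have hne : γi i ≠ 0 := (hγi i).ne'
    rw [hKstar i, hβi i]
    field_simp
    ring
  -- sum of Kstar
  have hsumβ : (∑ i, βi i) = (∑ i, 1/γi i) / D := by
    rw [Finset.sum_congr rfl fun i _ => hβi i, Finset.sum_div]
  have hSumK : (∑ i, Kstar i) - a = c * (1/γ) / D := by
    have : (∑ i, Kstar i) = (∑ i, ai i) - (∑ i, βi i) * c := by
      rw [Finset.sum_congr rfl fun i _ => hKstar i, Finset.sum_sub_distrib,
        Finset.sum_mul]
    rw [this, hsumβ]
    have hDdef : (∑ i, 1/γi i) = D - 1/γ := by rw [hD]; ring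
    rw [hDdef]
    field_simp
    ring
  have hγS : γ * ((∑ i, Kstar i) - a) = c / D := by
    rw [hSumK]
    field_simp
  -- decomposition
  have key : ∀ Kv : Fin n → ℝ,
      (∑ i, γi i * (Kv i - ai i) ^ 2) + γ * ((∑ j, Kv j) - a) ^ 2 =
      ((∑ i, γi i * (Kstar i - ai i) ^ 2) + γ * ((∑ j, Kstar j) - a) ^ 2)
      + (∑ i, γi i * (Kv i - Kstar i) ^ 2) + γ * (∑ i, (Kv i - Kstar i)) ^ 2 := by
    intro Kv
    have e1 : ∀ i ∈ Finset.univ, γi i * (Kv i - ai i) ^ 2 =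
        γi i * (Kstar i - ai i) ^ 2 + γi i * (Kv i - Kstar i) ^ 2
        + 2 * (γi i * (Kstar i - ai i)) * (Kv i - Kstar i) := fun i _ => by ring
    have e1' : (∑ i, γi i * (Kv i - ai i) ^ 2) =
        (∑ i, γi i * (Kstar i - ai i) ^ 2) + (∑ i, γi i * (Kv i - Kstar i) ^ 2)
        + (-(2 * (c/D))) * (∑ i, (Kv i - Kstar i)) := by
      rw [Finset.sum_congr rfl e1]
      rw [Finset.sum_add_distrib, Finset.sum_add_distrib]
      congr 1
      rw [Finset.mul_sum]
      exact Finset.sum_congr rfl fun i _ => by rw [hKa i]; ring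
    have e2 : γ * ((∑ j, Kv j) - a) ^ 2 =
        γ * ((∑ j, Kstar j) - a) ^ 2 + γ * (∑ i, (Kv i - Kstar i)) ^ 2
        + 2 * (γ * ((∑ j, Kstar j) - a)) * (∑ i, (Kv i - Kstar i)) := by
      have : (∑ j, Kv j) - a = ((∑ j, Kstar j) - a) + (∑ i, (Kv i - Kstar i)) := by
        rw [Finset.sum_sub_distrib]; ring
      rw [this]; ring
    rw [e1', e2, hγS]
    ring
  refine ⟨?_, ?_, ?_⟩
  · intro Kv
    rw [key Kv]
    have h1 : 0 ≤ ∑ i, γi i * (Kv i - Kstar i) ^ 2 :=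
      Finset.sum_nonneg fun i _ => mul_nonneg (hγi i).le (sq_nonneg _)
    have h2 : 0 ≤ γ * (∑ i, (Kv i - Kstar i)) ^ 2 := by positivity
    linarith
  · intro Kv heq
    rw [key Kv] at heq
    have h1 : 0 ≤ ∑ i, γi i * (Kv i - Kstar i) ^ 2 :=
      Finset.sum_nonneg fun i _ => mul_nonneg (hγi i).le (sq_nonneg _)
    have h2 : 0 ≤ γ * (∑ i, (Kv i - Kstar i)) ^ 2 := by positivity
    have hz : (∑ i, γi i * (Kv i - Kstar i) ^ 2) = 0 := by linarith
    have := (Finset.sum_eq_zero_iff_of_nonneg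
      (fun i _ => mul_nonneg (hγi i).le (sq_nonneg _) : ∀ i ∈ Finset.univ, (0:ℝ) ≤ γi i * (Kv i - Kstar i) ^ 2)).mp hz
    funext i
    have hi := this i (Finset.mem_univ i)
    have : (Kv i - Kstar i) ^ 2 = 0 := by
      rcases mul_eq_zero.mp hi with h | h
      · exact absurd h (hγi i).ne'
      · exact h
    have := pow_eq_zero_iff (n := 2) (by norm_num) |>.mp this
    linarith
  · have : (∑ i, Kstar i) = a + c * (1/γ) / D := by linarith [hSumK]
    rw [this, hβ]
    ring
end
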